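/- arXiv:2512.20450 — 3 statements merged into one kernel-verified Lean document; each statement's English description precedes it below -/
import Mathlib

section
/- Let m ≥ 1 and let l ≥ 3 and h be integers with 0 < h < l. Every simple m-colored quiver Q on vertices a₁, …, a_l whose only arrows form an (l,h)-central cycle (a₁a₂…a_l) (together with their skew-symmetric reverses) is mutation-equivalent to the quiver Ã_{l−h,h}. -/
open Finset

open scoped Classical

namespace CM

variable {V : Type*}

/-- Raw data of an `m`-colored quiver: `Q i j c` is the number of arrows
from `i` to `j` with color `c`. -/
abbrev CQ (V : Type*) := V → V → ℕ → ℕ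

/-- A colored quiver is simple if there is at most one arrow between distinct vertices. -/
def Simple (m : ℕ) (Q : CQ V) : Prop :=
  ∀ i j : V, i ≠ j → (∑ c ∈ Finset.range (m + 1), Q i j c) ≤ 1

/-- The axioms of an `m`-colored quiver: colors bounded by `m`, no loops,
monochromatic and skew-symmetric. -/
structure IsColoredQuiver (m : ℕ) (Q : CQ V) : Prop where
  colorBound : ∀ i j c, m < c → Q i j c = 0
  noLoops : ∀ i c, Q i i c = 0
  mono : ∀ i j c c', Q i j c ≠ 0 → c ≠ c' → Q i j c' = 0
  skew : ∀ i j c, c ≤ m → Q i j c = Q j i (m - c)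

/-- Colored mutation of `Q` at the vertex `j`. -/
noncomputable def mutate (m : ℕ) (Q : CQ V) (j : V) : CQ V :=
  fun i k c =>
    if m < c then 0
    else if i = k then 0
    else if k = j then Q i k ((c + 1) % (m + 1))
    else if i = j then Q i k ((c + m) % (m + 1))
    else
      (((Q i k c : ℤ) - ∑ t ∈ (Finset.range (m + 1)).erase c, (Q i k t : ℤ))
          + ((Q i j c : ℤ) - (if c = 0 then 0 else (Q i j (c - 1) : ℤ))) * (Q j k 0 : ℤ)
          + (Q i j m : ℤ) * ((Q j k c : ℤ) - (Q j k (c + 1) : ℤ))).toNat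

/-- Mutation equivalence: `Q'` is obtained from `Q` by a finite sequence of
colored mutations. -/
def MutEquiv (m : ℕ) (Q Q' : CQ V) : Prop :=
  ∃ js : List V, Q' = js.foldl (mutate m) Q

/-- Cyclic successor on `Fin l`. -/
def fsucc {l : ℕ} (i : Fin l) : Fin l := ⟨((i : ℕ) + 1) % l, Nat.mod_lt _ i.pos⟩

/-- There is an arrow from `i` to `j` (of some color `≤ m`). -/
def HasArrow (m : ℕ) (Q : CQ V) (i j : V) : Prop := ∃ c, c ≤ m ∧ Q i j c ≠ 0

/-- The underlying graph of a colored quiver. -/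
def underlying (m : ℕ) (Q : CQ V) : SimpleGraph V where
  Adj i j := i ≠ j ∧ (HasArrow m Q i j ∨ HasArrow m Q j i)
  symm := ⟨fun i j hh => ⟨Ne.symm hh.1, hh.2.symm⟩⟩
  loopless := ⟨fun i hh => hh.1 rfl⟩

/-- Number of neighbors of `v`. -/
noncomputable def deg (m : ℕ) (Q : CQ V) (v : V) : ℕ :=
  {u | (underlying m Q).Adj v u}.ncard

/-- A clique: any two distinct members are joined by arrows. -/
def IsClique (m : ℕ) (Q : CQ V) (s : Finset V) : Prop :=
  ∀ i ∈ s, ∀ j ∈ s, i ≠ j → HasArrow m Q i j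

/-- An `m`-admissible triangle. -/
def MAdmissible (m : ℕ) (Q : CQ V) (x y z : V) : Prop :=
  ∃ a b c, a ≤ m ∧ b ≤ m ∧ c ≤ m ∧ Q x y a ≠ 0 ∧ Q y z b ≠ 0 ∧ Q z x c ≠ 0 ∧
    (a + b + c = m - 1 ∨ a + b + c = 2 * m + 1)

/-- A hole: an induced cycle of length at least four in a graph. -/
def IsHole (G : SimpleGraph V) (n : ℕ) (v : Fin n → V) : Prop :=
  4 ≤ n ∧ Function.Injective v ∧
    ∀ i j : Fin n, G.Adj (v i) (v j) ↔ (j = fsucc i ∨ i = fsucc j)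

def HoleFree (G : SimpleGraph V) : Prop := ∀ (n : ℕ) (v : Fin n → V), ¬ IsHole G n v

/-- A quiver of type `A n`: the underlying graph is a path on `n` vertices. -/
def IsTypeA (m n : ℕ) (Q : CQ V) : Prop :=
  ∃ e : Fin n ≃ V, ∀ i j : Fin n,
    (underlying m Q).Adj (e i) (e j) ↔ ((j : ℕ) = (i : ℕ) + 1 ∨ (i : ℕ) = (j : ℕ) + 1)

/-- The class `𝒬ᵐₙ` of colored quivers of mutation type `A n`. -/
def ClassQA (m n : ℕ) {V : Type*} [Finite V] (Q : CQ V) : Prop :=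
  IsColoredQuiver m Q ∧ Simple m Q ∧ Nat.card V = n ∧ (underlying m Q).Connected ∧
    HoleFree (underlying m Q) ∧
    (∀ v : V, 0 < deg m Q v →
      ∃ C B : Finset V, IsClique m Q C ∧ IsClique m Q B ∧ v ∈ C ∧ v ∈ B ∧
        C.card + B.card = deg m Q v + 2 ∧ C.card ≤ m + 2 ∧ B.card ≤ m + 2 ∧
        ∀ i ∈ C, ∀ j ∈ B, i ≠ v → j ≠ v → ¬ HasArrow m Q i j) ∧
    (∀ x y z : V, x ≠ y → y ≠ z → x ≠ z → IsClique m Q {x, y, z} →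
      MAdmissible m Q x y z)

/-- Restriction of a colored quiver to a set of vertices. -/
def CQ.restrict (Q : CQ V) (S : Set V) : CQ S := fun i j c => Q i j c

/-- The subquiver keeping only the arrows inside `S`. -/
noncomputable def keepArrows (Q : CQ V) (S : Set V) : CQ V :=
  fun i j c => if i ∈ S ∧ j ∈ S then Q i j c else 0

/-- Delete all arrows joining vertices of the clique `C`. -/
noncomputable def delCliqueArrows (Q : CQ V) (C : Finset V) : CQ V :=
  fun i j c => if i ∈ C ∧ j ∈ C then 0 else Q i j c

/-- `C` is an almost extremal clique of `Q`: deleting its arrows leaves a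
connected component of type `A k` for some `k ≥ 1`. -/
def AlmostExtremal (m : ℕ) (Q : CQ V) (C : Finset V) : Prop :=
  IsClique m Q C ∧ 3 ≤ C.card ∧
    ∃ (w : V) (k : ℕ), 1 ≤ k ∧
      IsTypeA m k (CQ.restrict (delCliqueArrows Q C)
        {u | (underlying m (delCliqueArrows Q C)).Reachable w u})

/-- The quiver consisting of a single cycle with colors `c i` on the
arrows `i → i+1` (plus skew-symmetric reverses). -/
def cycleQuiver (m l : ℕ) (c : Fin l → ℕ) : CQ (Fin l) :=
  fun i j t =>
    (if i ≠ j ∧ j = fsucc i ∧ t = c i then 1 else 0) +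
    (if i ≠ j ∧ i = fsucc j ∧ t = m - c j then 1 else 0)

/-- The quiver `Ã_{p,q}`: a cycle with `p` arrows of color `0` followed by
`q` arrows of color `m`. -/
def tildeA (m p q : ℕ) : CQ (Fin (p + q)) :=
  cycleQuiver m (p + q) (fun i => if (i : ℕ) < p then 0 else m)

/-- `Q` is a copy of `Ã_{p,q}` on the vertex set `V`. -/
def IsTildeA (m p q : ℕ) (Q : CQ V) : Prop :=
  ∃ e : Fin (p + q) ≃ V, ∀ i j c, Q (e i) (e j) c = tildeA m p q i j c

/-- The linear quiver on `Fin l`, arrow `i → i+1` colored `c i`. -/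
def pathQuiver (m l : ℕ) (c : ℕ → ℕ) : CQ (Fin l) :=
  fun i j t =>
    if (j : ℕ) = (i : ℕ) + 1 ∧ t = c (i : ℕ) then 1
    else if (i : ℕ) = (j : ℕ) + 1 ∧ t = m - c (j : ℕ) then 1 else 0

/-- `Q` consists of a single `(l,h)`-central cycle. -/
def IsCentralCycleQuiver (m l h : ℕ) (Q : CQ V) : Prop :=
  ∃ (a : Fin l → V) (c : Fin l → ℕ), Function.Bijective a ∧ (∀ i, c i ≤ m) ∧
    (∑ i, c i = h * m) ∧ ∀ i j t, Q (a i) (a j) t = cycleQuiver m l c i j t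

/-- A triangle quiver on `Fin 3` with arrows `0 →^{c1} 1`, `0 →^{c2} 2`,
`1 →^{c3} 2` (plus skew-symmetric reverses). -/
def triQ (m c1 c2 c3 : ℕ) : CQ (Fin 3) := fun i j c =>
  if i = 0 ∧ j = 1 ∧ c = c1 then 1
  else if i = 1 ∧ j = 0 ∧ c = m - c1 then 1
  else if i = 0 ∧ j = 2 ∧ c = c2 then 1
  else if i = 2 ∧ j = 0 ∧ c = m - c2 then 1
  else if i = 1 ∧ j = 2 ∧ c = c3 then 1
  else if i = 2 ∧ j = 1 ∧ c = m - c3 then 1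
  else 0

/-- Data witnessing membership of `Q` in the class `𝒬ᵐ_{p,q}`. -/
structure QpqData (m p q : ℕ) {V : Type*} [Fintype V] (Q : CQ V) where
  colored : IsColoredQuiver m Q
  cardV : Nat.card V = p + q
  conn : (underlying m Q).Connected
  l : ℕ
  h : ℕ
  hl : 2 ≤ l
  hpos : 0 < h
  hlt : h < l
  a : Fin l → V
  col : Fin l → ℕ
  inja : Function.Injective a
  colLe : ∀ i, col i ≤ m
  arrows : ∀ i : Fin l, Q (a i) (a (fsucc i)) (col i) ≠ 0
  csum : ∑ i, col i = h * m
  induced : ∀ i j : Fin l, HasArrow m Q (a i) (a j) → (j = fsucc i ∨ i = fsucc j)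
  central_unique : ∀ (l' h' : ℕ) (a' : Fin l' → V) (col' : Fin l' → ℕ),
      2 ≤ l' → 0 < h' → h' < l' → Function.Injective a' → (∀ i, col' i ≤ m) →
      (∀ i : Fin l', Q (a' i) (a' (fsucc i)) (col' i) ≠ 0) →
      (∑ i, col' i = h' * m) →
      (∀ i j : Fin l', HasArrow m Q (a' i) (a' j) → (j = fsucc i ∨ i = fsucc j)) →
      Set.range a' = Set.range a
  double2 : l = 2 →
      (∀ c, c ≤ m → Q (a ⟨0, by omega⟩) (a ⟨1, by omega⟩) c ≠ 0 →
        Q (a ⟨0, by omega⟩) (a ⟨1, by omega⟩) c = 2) ∧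
      (∀ u v : V, u ≠ v → (u ∉ Set.range a ∨ v ∉ Set.range a) →
        (∑ c ∈ Finset.range (m + 1), Q u v c) ≤ 1)
  simple3 : 3 ≤ l → Simple m Q
  holes3 : l ≤ 3 → HoleFree (underlying m Q)
  holes4 : 4 ≤ l → ∀ (n : ℕ) (v : Fin n → V), IsHole (underlying m Q) n v →
      Set.range v = Set.range a
  vertexCliques : ∀ v : V, 0 < deg m Q v →
      ∃ Cr Bk : Finset V, IsClique m Q Cr ∧ IsClique m Q Bk ∧ v ∈ Cr ∧ v ∈ Bk ∧
        1 ≤ Cr.card ∧ Cr.card ≤ m + 2 ∧ 1 ≤ Bk.card ∧ Bk.card ≤ m + 2 ∧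
        deg m Q v = Cr.card + Bk.card - 2 - (if l = 2 then 1 else 0) ∧
        (∀ u ∈ Cr, ∀ w ∈ Bk, u ≠ v → w ≠ v → u ≠ w → HasArrow m Q u w →
          (l = 3 ∧ ({u, v, w} : Set V) = Set.range a))
  D : Fin l → Finset V
  Dclique : ∀ i, IsClique m Q (D i)
  Dmem : ∀ i : Fin l, a i ∈ D i ∧ a (fsucc i) ∈ D i
  Dcard : ∀ i, (D i).card ≤ m + 2
  Dmax : ∀ (i : Fin l) (D' : Finset V), IsClique m Q D' → a i ∈ D' →
      a (fsucc i) ∈ D' → D' ⊆ D i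
  admissible : ∀ x y z : V, x ≠ y → y ≠ z → x ≠ z → IsClique m Q {x, y, z} →
      ¬ (l = 3 ∧ ({x, y, z} : Set V) = Set.range a) → MAdmissible m Q x y z
  periph_tri : ∀ w : V, w ∉ Set.range a → ∀ i j : Fin l, w ∈ D i → w ∈ D j → i = j
  Del : CQ V
  hDel : Del = fun u v c => if ∃ i, u ∈ D i ∧ v ∈ D i then 0 else Q u v c
  nw : V → ℕ
  hnw : ∀ w : V, nw w = {u | (underlying m Del).Reachable w u}.ncard
  central_isolated : ∀ (i : Fin l) (u : V), ¬ (underlying m Del).Adj (a i) u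
  periph_disj : ∀ w w' : V, w ∉ Set.range a → w' ∉ Set.range a →
      (∃ i, w ∈ D i) → (∃ i, w' ∈ D i) → w ≠ w' →
      ¬ (underlying m Del).Reachable w w'
  periph_cover : ∀ u : V, u ∉ Set.range a →
      ∃ w : V, w ∉ Set.range a ∧ (∃ i, w ∈ D i) ∧ (underlying m Del).Reachable w u
  QwClass : ∀ w : V, w ∉ Set.range a → (∃ i, w ∈ D i) →
      ClassQA m (nw w) (CQ.restrict Del {u | (underlying m Del).Reachable w u})
  Wp : Finset V
  Wq : Finset V
  hWp : ∀ w : V, w ∈ Wp ↔ (w ∉ Set.range a ∧ ∃ (i : Fin l) (c1 c2 : ℕ),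
      w ∈ D i ∧ c1 ≤ m ∧ c2 ≤ m ∧ Q (a (fsucc i)) w c1 ≠ 0 ∧ Q w (a i) c2 ≠ 0 ∧
      col i + c1 + c2 = m - 1)
  hWq : ∀ w : V, w ∈ Wq ↔ (w ∉ Set.range a ∧ ∃ (i : Fin l) (c1 c2 : ℕ),
      w ∈ D i ∧ c1 ≤ m ∧ c2 ≤ m ∧ Q (a (fsucc i)) w c1 ≠ 0 ∧ Q w (a i) c2 ≠ 0 ∧
      col i + c1 + c2 = 2 * m + 1)
  hp : p = l - h + ∑ w ∈ Wp, nw w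
  hq : q = h + ∑ w ∈ Wq, nw w

/-- Membership in the class `𝒬ᵐ_{p,q}`. -/
def ClassQpq (m p q : ℕ) {V : Type*} [Fintype V] (Q : CQ V) : Prop :=
  Nonempty (QpqData m p q Q)

/-- `w` is a peripheral vertex. -/
def QpqData.Peripheral {m p q : ℕ} {V : Type*} [Fintype V] {Q : CQ V}
    (d : QpqData m p q Q) (w : V) : Prop :=
  w ∉ Set.range d.a ∧ ∃ i, w ∈ d.D i

/-- The connected component of `w` in the quiver obtained by deleting the
arrows of the boundary subquivers and of the central cycle. -/
def QpqData.comp {m p q : ℕ} {V : Type*} [Fintype V] {Q : CQ V}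
    (d : QpqData m p q Q) (w : V) : Set V :=
  {u | (underlying m d.Del).Reachable w u}

/-- The graph of color-`0` arrows of a colored quiver. -/
def zeroGraph (Q : CQ V) : SimpleGraph V where
  Adj i j := i ≠ j ∧ (Q i j 0 ≠ 0 ∨ Q j i 0 ≠ 0)
  symm := ⟨fun i j hh => ⟨Ne.symm hh.1, hh.2.symm⟩⟩
  loopless := ⟨fun i hh => hh.1 rfl⟩

/-- Number of color-`0` arrows of `R` inside `S` lying in no oriented
`3`-cycle of color-`0` arrows inside `S`. -/
noncomputable def zeroArrowsNoTri (R : CQ V) (S : Set V) : ℕ :=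
  {uv : V × V | uv.1 ∈ S ∧ uv.2 ∈ S ∧ R uv.1 uv.2 0 ≠ 0 ∧
    ¬ ∃ x ∈ S, R uv.2 x 0 ≠ 0 ∧ R x uv.1 0 ≠ 0}.ncard

/-- Number of oriented `3`-cycles of color-`0` arrows of `R` inside `S`. -/
noncomputable def zeroTriCount (R : CQ V) (S : Set V) : ℕ :=
  {t : Finset V | ∃ u v x : V, u ∈ S ∧ v ∈ S ∧ x ∈ S ∧ u ≠ v ∧ v ≠ x ∧ u ≠ x ∧
    t = {u, v, x} ∧ R u v 0 ≠ 0 ∧ R v x 0 ≠ 0 ∧ R x u 0 ≠ 0}.ncard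

/-- Number of oriented cycles of length `k` of color-`0` arrows of `R`
inside `S` (counted by their vertex sets). -/
noncomputable def orientKCycles (R : CQ V) (S : Set V) (k : ℕ) : ℕ :=
  {t : Finset V | ∃ v : Fin k → V, Function.Injective v ∧ (∀ i, v i ∈ S) ∧
    t = Finset.image v Finset.univ ∧ ∀ i, R (v i) (v (fsucc i)) 0 ≠ 0}.ncard



/-!
Write `c i` for the color of the arrow `i → i + 1` of the cycle. Mutating at `i + 1` when
`c i ≠ m` and `c (i + 1) ≠ 0` creates no chord, so the result is again a cycle, with `c i`
lowered and `c (i + 1)` raised by one in `ℤ/(m+1)`. Chaining such mutations carries a unit of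
color from any arrow of the cycle to any later one across a stretch of arrows of color `0` or
`m`. Since `m` divides the sum `h * m`, colors strictly between `0` and `m` never occur alone;
shifting units from one of them to the next until one of the two reaches `0` or `m` ends,
without changing the sum, with colors `0` and `m` only, exactly `h` of them equal to `m`.
Moving these `m`s one at a time to the positions they have in `Ã_{l-h,h}` finishes the proof.
-/

open Fin.NatCast Fin.CommRing

section Mutation

variable {V : Type*} {m : ℕ}

theorem MutEquiv.refl (Q : CQ V) : MutEquiv m Q Q := ⟨[], rfl⟩

theorem MutEquiv.trans {Q₁ Q₂ Q₃ : CQ V} (h₁₂ : MutEquiv m Q₁ Q₂) (h₂₃ : MutEquiv m Q₂ Q₃) :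
    MutEquiv m Q₁ Q₃ := by
  obtain ⟨js₁, rfl⟩ := h₁₂
  obtain ⟨js₂, rfl⟩ := h₂₃
  exact ⟨js₁ ++ js₂, (List.foldl_append ..).symm⟩

theorem MutEquiv.of_mutate (Q : CQ V) (j : V) : MutEquiv m Q (mutate m Q j) := ⟨[j], rfl⟩

theorem toNat_sub_sum_erase_of_sum_le_one {s : Finset ℕ} {f : ℕ → ℕ} {t : ℕ} (ht : t ∈ s)
    (hf : ∑ u ∈ s, f u ≤ 1) : ((f t : ℤ) - ∑ u ∈ s.erase t, (f u : ℤ)).toNat = f t := by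
  rw [← Finset.add_sum_erase s f ht] at hf
  push_cast [← Nat.cast_sum]
  omega

variable {Q : CQ V} {i j k : V} {t : ℕ}

theorem mutate_apply_of_lt (ht : m < t) : mutate m Q j i k t = 0 := if_pos ht

theorem mutate_apply_self : mutate m Q j i i t = 0 := by simp [mutate]

theorem mutate_apply_into (hij : i ≠ j) (ht : t ≤ m) :
    mutate m Q j i j t = Q i j ((t + 1) % (m + 1)) := by
  simp [mutate, hij, ht.not_gt]

theorem mutate_apply_out (hjk : j ≠ k) (ht : t ≤ m) :
    mutate m Q j j k t = Q j k ((t + m) % (m + 1)) := by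
  simp [mutate, hjk, hjk.symm, ht.not_gt]

/-- Without a color-`m` arrow `i → j` and a color-`0` arrow `j → k` no arrow `i → k` is
composed, and in a simple quiver the cancellation of opposite arrows between `i` and `k` has
nothing to cancel. -/
theorem mutate_apply_of_simple (hik : i ≠ k) (hij : i ≠ j) (hkj : k ≠ j) (ht : t ≤ m)
    (hsimple : ∑ s ∈ Finset.range (m + 1), Q i k s ≤ 1) (hij_m : Q i j m = 0)
    (hjk_0 : Q j k 0 = 0) : mutate m Q j i k t = Q i k t := by
  simp only [mutate, ht.not_gt, hik, hij, hkj, if_false, hij_m, hjk_0, Nat.cast_zero, mul_zero,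
    zero_mul, add_zero]
  exact toNat_sub_sum_erase_of_sum_le_one (Finset.mem_range.2 (Nat.lt_succ_of_le ht)) hsimple

end Mutation

section Colors

/-- Colors `0, …, m` are read in `ℤ/(m+1)`: `predColor m` and `succColor m` are `x ↦ x - 1`
and `y ↦ y + 1` there. -/
def predColor (m x : ℕ) : ℕ := if x = 0 then m else x - 1

def succColor (m y : ℕ) : ℕ := if y = m then 0 else y + 1

variable {m x y t : ℕ}

theorem predColor_le (hx : x ≤ m) : predColor m x ≤ m := by
  unfold predColor; split <;> omega

theorem succColor_le (hy : y ≤ m) : succColor m y ≤ m := by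
  unfold succColor; split <;> omega

theorem predColor_succColor : predColor m (succColor m y) = y := by
  unfold predColor succColor; split_ifs <;> first | omega | simp_all

theorem succColor_predColor (hx : x ≤ m) : succColor m (predColor m x) = x := by
  unfold predColor succColor; split_ifs <;> omega

theorem add_one_mod_eq_iff_eq_predColor (ht : t ≤ m) (hx : x ≤ m) :
    (t + 1) % (m + 1) = x ↔ t = predColor m x := by
  rcases ht.lt_or_eq with ht | rfl
  · rw [Nat.mod_eq_of_lt (by omega)]; unfold predColor; split_ifs <;> omega
  · rw [Nat.mod_self]; unfold predColor; split_ifs <;> omega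

theorem add_mod_eq_iff_eq_succColor (ht : t ≤ m) :
    (t + m) % (m + 1) = y ↔ t = succColor m y := by
  rcases Nat.eq_zero_or_pos t with rfl | ht0
  · rw [zero_add, Nat.mod_eq_of_lt (by omega)]; unfold succColor; split_ifs <;> simp <;> omega
  · rw [show t + m = (t - 1) + 1 * (m + 1) by omega, Nat.add_mul_mod_self_right,
      Nat.mod_eq_of_lt (by omega)]
    unfold succColor; split_ifs <;> omega

theorem sub_succColor (hy : y ≤ m) : m - succColor m y = predColor m (m - y) := by
  unfold predColor succColor; split_ifs <;> omega

theorem sub_predColor (hx : x ≤ m) : m - predColor m x = succColor m (m - x) := by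
  unfold predColor succColor; split_ifs <;> omega

end Colors

section Sums

theorem exists_lt_of_sum_eq_of_ne {ι M : Type*} [Fintype ι] [AddCommMonoid M] [LinearOrder M]
    [IsOrderedCancelAddMonoid M] {f g : ι → M} (hsum : ∑ i, f i = ∑ i, g i) (hne : f ≠ g) :
    ∃ i, f i < g i := by
  by_contra! h
  refine hne (funext fun i => ?_)
  exact ((Finset.sum_eq_sum_iff_of_le fun i _ => h i).1 hsum.symm i (Finset.mem_univ i)).symm

theorem card_filter_lt_of_imp {ι : Type*} [Fintype ι] {p q : ι → Prop} [DecidablePred p]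
    [DecidablePred q] (hpq : ∀ v, p v → q v) {i : ι} (hq : q i) (hp : ¬ p i) :
    (univ.filter p).card < (univ.filter q).card :=
  Finset.card_lt_card ⟨monotone_filter_right _ fun v _ => hpq v,
    fun h => hp (mem_filter.1 (h (mem_filter.2 ⟨mem_univ i, hq⟩))).2⟩

variable {ι : Type*} [DecidableEq ι]

theorem sum_update_update_add [Fintype ι] {i j : ι} (hij : i ≠ j) (f : ι → ℕ) (x y : ℕ) :
    ∑ v, Function.update (Function.update f i x) j y v + f i + f j = ∑ v, f v + x + y := by
  have key : ∀ g : ι → ℕ, ∑ v, g v = g i + g j + ∑ v ∈ (univ.erase i).erase j, g v := by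
    intro g
    rw [add_assoc, Finset.add_sum_erase _ _ (mem_erase.2 ⟨hij.symm, mem_univ j⟩),
      Finset.add_sum_erase _ _ (mem_univ i)]
  have hrest : ∑ v ∈ (univ.erase i).erase j, Function.update (Function.update f i x) j y v
      = ∑ v ∈ (univ.erase i).erase j, f v := Finset.sum_congr rfl fun v hv => by
    rw [Function.update_of_ne (ne_of_mem_erase hv),
      Function.update_of_ne (ne_of_mem_erase (mem_of_mem_erase hv))]
  rw [key, key f, hrest, Function.update_self, Function.update_of_ne hij, Function.update_self]
  omega

theorem update_update_le {f : ι → ℕ} {m x y : ℕ} (hf : ∀ v, f v ≤ m) (hx : x ≤ m) (hy : y ≤ m)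
    (i j v : ι) : Function.update (Function.update f i x) j y v ≤ m := by
  simp only [Function.update_apply]
  split_ifs
  exacts [hy, hx, hf v]

end Sums

section Offsets

variable {l : ℕ} [NeZero l]

theorem add_natCast_inj {a b : ℕ} (ha : a < l) (hb : b < l) (i : Fin l) :
    i + (a : Fin l) = i + b ↔ a = b := by
  rw [add_right_inj, Fin.ext_iff, Fin.val_cast_of_lt ha, Fin.val_cast_of_lt hb]

theorem add_natCast_ne_self {a : ℕ} (ha₀ : 0 < a) (ha : a < l) (i : Fin l) :
    i + (a : Fin l) ≠ i := by
  simpa using (add_natCast_inj ha (Nat.pos_of_ne_zero (NeZero.ne l)) i).not.2 ha₀.ne'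

theorem fsucc_eq_add_one (hl : 1 < l) (i : Fin l) : fsucc i = i + 1 := by
  ext
  simp [fsucc, Fin.val_add, Nat.mod_eq_of_lt hl]

theorem add_one_ne_self (hl : 1 < l) (i : Fin l) : i + 1 ≠ i := by
  simpa using add_natCast_ne_self one_pos hl i

theorem add_one_add_one_ne_self (hl : 2 < l) (i : Fin l) : i + 1 + 1 ≠ i := by
  simpa [add_assoc, one_add_one_eq_two] using add_natCast_ne_self two_pos hl i

theorem exists_add_natCast_eq {i j : Fin l} (hij : i ≠ j) :
    ∃ n, n + 1 < l ∧ i + ((n + 1 : ℕ) : Fin l) = j := by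
  have hpos : (j - i).val ≠ 0 := Fin.val_ne_zero_iff.2 (sub_ne_zero.2 hij.symm)
  refine ⟨(j - i).val - 1, by omega, ?_⟩
  rw [Nat.sub_add_cancel (Nat.pos_of_ne_zero hpos), Fin.cast_val_eq_self, add_sub_cancel]

theorem exists_nearest_add_natCast {P : Fin l → Prop} {i : Fin l} (h : ∃ v ≠ i, P v) :
    ∃ n, n + 1 < l ∧ P (i + (n + 1 : ℕ)) ∧ ∀ k, 0 < k → k ≤ n → ¬ P (i + k) := by
  classical
  obtain ⟨v, hvi, hv⟩ := h
  obtain ⟨n, hn, rfl⟩ := exists_add_natCast_eq hvi.symm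
  have hex : ∃ n, n + 1 < l ∧ P (i + (n + 1 : ℕ)) := ⟨n, hn, hv⟩
  refine ⟨Nat.find hex, (Nat.find_spec hex).1, (Nat.find_spec hex).2, fun k hk₀ hk hPk => ?_⟩
  refine Nat.find_min hex (m := k - 1) (by omega) ⟨by have := (Nat.find_spec hex).1; omega, ?_⟩
  rwa [Nat.sub_add_cancel hk₀]

end Offsets

def shiftUnit (m : ℕ) {l : ℕ} (c : Fin l → ℕ) (i j : Fin l) : Fin l → ℕ :=
  Function.update (Function.update c i (predColor m (c i))) j (succColor m (c j))

section ShiftUnit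

variable {m l : ℕ} {c : Fin l → ℕ} {i b j v : Fin l}

theorem shiftUnit_apply_source (hij : i ≠ j) : shiftUnit m c i j i = predColor m (c i) := by
  simp [shiftUnit, hij]

theorem shiftUnit_apply_target : shiftUnit m c i j j = succColor m (c j) := by
  simp [shiftUnit]

theorem shiftUnit_apply_of_ne (hi : v ≠ i) (hj : v ≠ j) : shiftUnit m c i j v = c v := by
  simp [shiftUnit, hi, hj]

theorem shiftUnit_le (hc : ∀ v, c v ≤ m) : ∀ v, shiftUnit m c i j v ≤ m :=
  update_update_le hc (predColor_le (hc i)) (succColor_le (hc j)) i j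

theorem shiftUnit_shiftUnit_of_target (hib : i ≠ b) (hij : i ≠ j) (hbj : b ≠ j) :
    shiftUnit m (shiftUnit m c i b) b j = shiftUnit m c i j := by
  funext v
  simp only [shiftUnit, Function.update_apply]
  split_ifs <;> simp_all [predColor_succColor]

theorem shiftUnit_shiftUnit_of_source (hib : i ≠ b) (hij : i ≠ j) (hbj : b ≠ j) (hb : c b ≤ m) :
    shiftUnit m (shiftUnit m c b j) i b = shiftUnit m c i j := by
  funext v
  simp only [shiftUnit, Function.update_apply]
  split_ifs <;> simp_all [succColor_predColor]

theorem shiftUnit_update_update {x y : ℕ} (hij : i ≠ j) (hx : x ≠ 0) (hy : y ≠ m) :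
    shiftUnit m (Function.update (Function.update c i x) j y) i j
      = Function.update (Function.update c i (x - 1)) j (y + 1) := by
  funext v
  simp only [shiftUnit, Function.update_apply]
  split_ifs <;> simp_all [predColor, succColor]

end ShiftUnit

section CycleQuiver

variable {m l : ℕ}

theorem cycleQuiver_apply_self (c : Fin l → ℕ) (i : Fin l) (t : ℕ) :
    cycleQuiver m l c i i t = 0 := by
  simp [cycleQuiver]

theorem cycleQuiver_apply_of_lt {c : Fin l → ℕ} (hc : ∀ i, c i ≤ m) {t : ℕ} (ht : m < t)
    (i k : Fin l) : cycleQuiver m l c i k t = 0 := by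
  have := hc i
  simp [cycleQuiver]
  omega

variable [NeZero l] (hl : 3 ≤ l) (c : Fin l → ℕ) (t : ℕ)
include hl

theorem cycleQuiver_apply_add_one (i : Fin l) :
    cycleQuiver m l c i (i + 1) t = if t = c i then 1 else 0 := by
  simp [cycleQuiver, fsucc_eq_add_one (by omega : 1 < l), (add_one_ne_self (by omega) i).symm,
    (add_one_add_one_ne_self (by omega) i).symm]

theorem cycleQuiver_add_one_apply (k : Fin l) :
    cycleQuiver m l c (k + 1) k t = if t = m - c k then 1 else 0 := by
  simp [cycleQuiver, fsucc_eq_add_one (by omega : 1 < l), add_one_ne_self (by omega) k,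
    (add_one_add_one_ne_self (by omega) k).symm]

theorem cycleQuiver_apply_of_not_adj {i k : Fin l} (h₁ : k ≠ i + 1) (h₂ : i ≠ k + 1) :
    cycleQuiver m l c i k t = 0 := by
  simp [cycleQuiver, fsucc_eq_add_one (by omega : 1 < l), h₁, h₂]

omit t in
theorem simple_cycleQuiver : Simple m (cycleQuiver m l c) := by
  intro i k _
  rcases eq_or_ne k (i + 1) with rfl | h₁
  · simp only [cycleQuiver_apply_add_one hl]
    rw [Finset.sum_ite_eq']; split <;> omega
  rcases eq_or_ne i (k + 1) with rfl | h₂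
  · simp only [cycleQuiver_add_one_apply hl]
    rw [Finset.sum_ite_eq']; split <;> omega
  · simp [cycleQuiver_apply_of_not_adj hl c _ h₁ h₂]

end CycleQuiver

section SingleMutation

variable {m l : ℕ} [NeZero l] (hl : 3 ≤ l) {c : Fin l → ℕ} (hc : ∀ v, c v ≤ m) {i : Fin l}
  {t : ℕ} (ht : t ≤ m)
include hl hc ht

theorem mutate_cycleQuiver_apply_into {u : Fin l} (hu : u ≠ i + 1) :
    mutate m (cycleQuiver m l c) (i + 1) u (i + 1) t
      = cycleQuiver m l (shiftUnit m c i (i + 1)) u (i + 1) t := by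
  have hi : i ≠ i + 1 := (add_one_ne_self (by omega) i).symm
  rw [mutate_apply_into hu ht]
  rcases eq_or_ne u i with rfl | hui
  · simp only [cycleQuiver_apply_add_one hl, shiftUnit_apply_source hi,
      add_one_mod_eq_iff_eq_predColor ht (hc u)]
  rcases eq_or_ne u (i + 1 + 1) with rfl | hu₂
  · simp only [cycleQuiver_add_one_apply hl, shiftUnit_apply_target,
      sub_succColor (hc _), add_one_mod_eq_iff_eq_predColor ht (Nat.sub_le m _)]
  · have h : i + 1 ≠ u + 1 := fun h => hui (add_right_cancel h).symm
    rw [cycleQuiver_apply_of_not_adj hl _ _ h hu₂, cycleQuiver_apply_of_not_adj hl _ _ h hu₂]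

theorem mutate_cycleQuiver_apply_out {w : Fin l} (hw : w ≠ i + 1) :
    mutate m (cycleQuiver m l c) (i + 1) (i + 1) w t
      = cycleQuiver m l (shiftUnit m c i (i + 1)) (i + 1) w t := by
  have hi : i ≠ i + 1 := (add_one_ne_self (by omega) i).symm
  rw [mutate_apply_out hw.symm ht]
  rcases eq_or_ne w (i + 1 + 1) with rfl | hw₂
  · simp only [cycleQuiver_apply_add_one hl, shiftUnit_apply_target,
      add_mod_eq_iff_eq_succColor ht]
  rcases eq_or_ne w i with rfl | hwi
  · simp only [cycleQuiver_add_one_apply hl, shiftUnit_apply_source hi, sub_predColor (hc _),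
      add_mod_eq_iff_eq_succColor ht]
  · have h : i + 1 ≠ w + 1 := fun h => hwi (add_right_cancel h).symm
    rw [cycleQuiver_apply_of_not_adj hl _ _ hw₂ h, cycleQuiver_apply_of_not_adj hl _ _ hw₂ h]

theorem mutate_cycleQuiver_apply_of_ne (hi : c i ≠ m) (hi₁ : c (i + 1) ≠ 0) {u w : Fin l}
    (huw : u ≠ w) (hu : u ≠ i + 1) (hw : w ≠ i + 1) :
    mutate m (cycleQuiver m l c) (i + 1) u w t
      = cycleQuiver m l (shiftUnit m c i (i + 1)) u w t := by
  have hin_m : cycleQuiver m l c u (i + 1) m = 0 := by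
    rcases eq_or_ne u i with rfl | hui
    · simp [cycleQuiver_apply_add_one hl, Ne.symm hi]
    rcases eq_or_ne u (i + 1 + 1) with rfl | hu₂
    · have := hc (i + 1)
      simp only [cycleQuiver_add_one_apply hl]; split_ifs <;> omega
    · exact cycleQuiver_apply_of_not_adj hl _ _ (fun h => hui (add_right_cancel h).symm) hu₂
  have hout_0 : cycleQuiver m l c (i + 1) w 0 = 0 := by
    rcases eq_or_ne w (i + 1 + 1) with rfl | hw₂
    · simp [cycleQuiver_apply_add_one hl, Ne.symm hi₁]
    rcases eq_or_ne w i with rfl | hwi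
    · have := hc w
      simp only [cycleQuiver_add_one_apply hl]; split_ifs <;> omega
    · exact cycleQuiver_apply_of_not_adj hl _ _ hw₂ (fun h => hwi (add_right_cancel h).symm)
  rw [mutate_apply_of_simple huw hu hw ht (simple_cycleQuiver hl c u w huw) hin_m hout_0]
  rcases eq_or_ne w (u + 1) with rfl | h₁
  · have hui : u ≠ i := fun h => hw (h ▸ rfl)
    simp only [cycleQuiver_apply_add_one hl, shiftUnit_apply_of_ne hui hu]
  rcases eq_or_ne u (w + 1) with rfl | h₂
  · have hwi : w ≠ i := fun h => hu (h ▸ rfl)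
    simp only [cycleQuiver_add_one_apply hl, shiftUnit_apply_of_ne hwi hw]
  · rw [cycleQuiver_apply_of_not_adj hl _ _ h₁ h₂, cycleQuiver_apply_of_not_adj hl _ _ h₁ h₂]

omit ht in
theorem mutate_cycleQuiver (hi : c i ≠ m) (hi₁ : c (i + 1) ≠ 0) :
    mutate m (cycleQuiver m l c) (i + 1) = cycleQuiver m l (shiftUnit m c i (i + 1)) := by
  funext u w t
  rcases lt_or_ge m t with ht | ht
  · rw [mutate_apply_of_lt ht, cycleQuiver_apply_of_lt (shiftUnit_le hc) ht]
  rcases eq_or_ne u w with rfl | huw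
  · rw [mutate_apply_self, cycleQuiver_apply_self]
  rcases eq_or_ne w (i + 1) with rfl | hw
  · exact mutate_cycleQuiver_apply_into hl hc ht huw
  rcases eq_or_ne u (i + 1) with rfl | hu
  · exact mutate_cycleQuiver_apply_out hl hc ht hw
  · exact mutate_cycleQuiver_apply_of_ne hl hc ht hi hi₁ huw hu hw

end SingleMutation

section Transfer

variable {m l : ℕ} [NeZero l] (hl : 3 ≤ l) {c : Fin l → ℕ} {i : Fin l}
include hl

theorem mutEquiv_shiftUnit_add_one (hc : ∀ v, c v ≤ m) (hi : c i ≠ m) (hi₁ : c (i + 1) ≠ 0) :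
    MutEquiv m (cycleQuiver m l c) (cycleQuiver m l (shiftUnit m c i (i + 1))) := by
  rw [← mutate_cycleQuiver hl hc hi hi₁]
  exact MutEquiv.of_mutate _ _

/-- A unit of color travels from `i` to `i + (n + 1)` across arrows of color `0` or `m`: the
last one, if of color `0`, is first raised to `m` by the move into the target; if of color `m`,
it is first lowered to `0` by the unit arriving from `i`. -/
theorem mutEquiv_shiftUnit_of_binary_between (hm : 1 ≤ m) (n : ℕ) :
    ∀ {c : Fin l → ℕ} {i : Fin l}, n + 1 < l → (∀ v, c v ≤ m) → c i ≠ m →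
      c (i + (n + 1 : ℕ)) ≠ 0 → (∀ k, 0 < k → k ≤ n → c (i + k) = 0 ∨ c (i + k) = m) →
      MutEquiv m (cycleQuiver m l c) (cycleQuiver m l (shiftUnit m c i (i + (n + 1 : ℕ)))) := by
  induction n with
  | zero =>
    intro c i _ hc hi hj _
    simp only [zero_add, Nat.cast_one] at hj ⊢
    exact mutEquiv_shiftUnit_add_one hl hc hi hj
  | succ n ih =>
    intro c i hn hc hi hj hwall
    set b : Fin l := i + (n + 1 : ℕ)
    have hjb : i + ((n + 1 + 1 : ℕ) : Fin l) = b + 1 := by simp only [b]; push_cast; ring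
    rw [hjb] at hj ⊢
    have hib : i ≠ b := (add_natCast_ne_self (by omega) (by omega) i).symm
    have hij : i ≠ b + 1 := hjb ▸ (add_natCast_ne_self (by omega) hn i).symm
    have hbj : b ≠ b + 1 := (add_one_ne_self (by omega) b).symm
    have hk : ∀ k, 0 < k → k ≤ n → i + (k : Fin l) ≠ b ∧ i + (k : Fin l) ≠ b + 1 := fun k _ _ =>
      ⟨(add_natCast_inj (by omega) (by omega) i).not.2 (by omega),
        hjb ▸ (add_natCast_inj (by omega) hn i).not.2 (by omega)⟩
    rcases hwall (n + 1) n.succ_pos le_rfl with hb | hb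
    · have h₁ := mutEquiv_shiftUnit_add_one hl hc (hb.trans_ne (by omega)) hj
      refine h₁.trans ?_
      rw [← shiftUnit_shiftUnit_of_source hib hij hbj (hc b)]
      refine ih (by omega) (shiftUnit_le hc) ?_ ?_ ?_
      · rwa [shiftUnit_apply_of_ne hib hij]
      · rw [shiftUnit_apply_source hbj, hb]; simp [predColor]; omega
      · intro k hk₀ hkn
        rw [shiftUnit_apply_of_ne (hk k hk₀ hkn).1 (hk k hk₀ hkn).2]
        exact hwall k hk₀ (by omega)
    · have h₁ := ih (by omega) hc hi (by omega) fun k hk₀ hkn => hwall k hk₀ (by omega)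
      refine h₁.trans ?_
      rw [← shiftUnit_shiftUnit_of_target hib hij hbj]
      refine mutEquiv_shiftUnit_add_one hl (shiftUnit_le hc) ?_ ?_
      · rw [shiftUnit_apply_target, hb]; simp [succColor]; omega
      · rwa [shiftUnit_apply_of_ne hij.symm hbj.symm]

theorem mutEquiv_shiftUnits_of_binary_between (hm : 1 ≤ m) {n : ℕ} (hn : n + 1 < l) {i j : Fin l}
    (hij : i + ((n + 1 : ℕ) : Fin l) = j) {c : Fin l → ℕ} (hc : ∀ v, c v ≤ m) (hi : c i ≠ m)
    (hj : c j ≠ 0) (hwall : ∀ k, 0 < k → k ≤ n → c (i + k) = 0 ∨ c (i + k) = m) {t : ℕ}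
    (ht : t ≤ c i) (htj : c j + t ≤ m) :
    MutEquiv m (cycleQuiver m l c)
      (cycleQuiver m l (Function.update (Function.update c i (c i - t)) j (c j + t))) := by
  have hne : i ≠ j := hij ▸ (add_natCast_ne_self (by omega) hn i).symm
  have hci := hc i
  induction t with
  | zero => simpa using MutEquiv.refl _
  | succ t ih =>
    refine (ih (by omega) (by omega)).trans ?_
    rw [← Nat.sub_sub, ← add_assoc,
      ← shiftUnit_update_update (m := m) (c := c) (x := c i - t) (y := c j + t) hne (by omega)
        (by omega)]
    subst hij
    refine mutEquiv_shiftUnit_of_binary_between hl hm n hn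
      (update_update_le (x := c i - t) (y := c _ + t) hc (by omega) (by omega) _ _)
      (by rw [Function.update_of_ne hne, Function.update_self]; omega)
      (by rw [Function.update_self]; omega)
      fun k hk₀ hkn => ?_
    have hki : i + (k : Fin l) ≠ i := add_natCast_ne_self hk₀ (by omega) i
    have hkj : i + (k : Fin l) ≠ i + ((n + 1 : ℕ) : Fin l) :=
      (add_natCast_inj (by omega) hn i).not.2 (by omega)
    rw [Function.update_of_ne hkj, Function.update_of_ne hki]
    exact hwall k hk₀ hkn

end Transfer

def midColored (m : ℕ) {l : ℕ} (c : Fin l → ℕ) : Finset (Fin l) :=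
  univ.filter fun v => c v ≠ 0 ∧ c v ≠ m

theorem exists_ne_mem_midColored_of_dvd_sum {l m : ℕ} {c : Fin l → ℕ} (hc : ∀ v, c v ≤ m)
    (hdvd : m ∣ ∑ v, c v) {i : Fin l} (hi : i ∈ midColored m c) :
    ∃ v ≠ i, v ∈ midColored m c := by
  simp only [midColored, mem_filter, mem_univ, true_and] at hi ⊢
  by_contra! h
  have hrest : m ∣ ∑ v ∈ univ.erase i, c v :=
    Finset.dvd_sum fun v hv => by
      rcases eq_or_ne (c v) 0 with h0 | h0
      · simp [h0]
      · rw [h v (ne_of_mem_erase hv) h0]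
  rw [← Finset.add_sum_erase _ _ (mem_univ i), Nat.dvd_add_left hrest] at hdvd
  have := Nat.le_of_dvd (Nat.pos_of_ne_zero hi.1) hdvd
  have := hc i
  omega

section Sorting

variable {m l : ℕ} [NeZero l] (hl : 3 ≤ l) (hm : 1 ≤ m)
include hl hm

theorem exists_mutEquiv_card_midColored_lt {c : Fin l → ℕ} (hc : ∀ v, c v ≤ m)
    (hdvd : m ∣ ∑ v, c v) {i : Fin l} (hi : i ∈ midColored m c) :
    ∃ c', MutEquiv m (cycleQuiver m l c) (cycleQuiver m l c') ∧ (∀ v, c' v ≤ m) ∧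
      ∑ v, c' v = ∑ v, c v ∧ (midColored m c').card < (midColored m c).card := by
  obtain ⟨n, hn, hj, hwall⟩ :=
    exists_nearest_add_natCast (exists_ne_mem_midColored_of_dvd_sum hc hdvd hi)
  generalize hij : i + ((n + 1 : ℕ) : Fin l) = j at hj
  simp only [midColored, mem_filter, mem_univ, true_and, not_and_or, not_not] at hi hj hwall
  have hne : i ≠ j := hij ▸ (add_natCast_ne_self (by omega) hn i).symm
  have hci := hc i
  have hcj := hc j
  set t := min (c i) (m - c j)
  have hti : t ≤ c i := min_le_left _ _
  have htj : t ≤ m - c j := min_le_right _ _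
  set c' := Function.update (Function.update c i (c i - t)) j (c j + t) with hc'_def
  have hc'i : c' i = c i - t := by simp [c', hne]
  have hc'j : c' j = c j + t := by simp [c']
  have hc'v : ∀ v, v ≠ i → v ≠ j → c' v = c v := fun v hvi hvj => by simp [c', hvi, hvj]
  refine ⟨c', mutEquiv_shiftUnits_of_binary_between hl hm hn hij hc hi.2 hj.1 hwall hti (by omega),
    update_update_le hc (by omega) (by omega) i j, ?_, ?_⟩
  · have := sum_update_update_add hne c (c i - t) (c j + t)
    rw [← hc'_def] at this
    omega
  have hmid : ∀ v, (c' v ≠ 0 ∧ c' v ≠ m) → c v ≠ 0 ∧ c v ≠ m := fun v hv => by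
    rcases eq_or_ne v i with rfl | hvi
    · exact hi
    rcases eq_or_ne v j with rfl | hvj
    · exact hj
    · rwa [← hc'v v hvi hvj]
  rcases le_total (c i) (m - c j) with h | h
  · exact card_filter_lt_of_imp hmid hi (by omega)
  · exact card_filter_lt_of_imp hmid hj (by omega)

theorem exists_mutEquiv_binary {c : Fin l → ℕ} (hc : ∀ v, c v ≤ m) (hdvd : m ∣ ∑ v, c v) :
    ∃ c', MutEquiv m (cycleQuiver m l c) (cycleQuiver m l c') ∧
      (∀ v, c' v = 0 ∨ c' v = m) ∧ ∑ v, c' v = ∑ v, c v := by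
  induction hN : (midColored m c).card using Nat.strong_induction_on generalizing c with
  | _ N ih =>
  by_cases hbin : ∀ v, c v = 0 ∨ c v = m
  · exact ⟨c, .refl _, hbin, rfl⟩
  obtain ⟨i, hi⟩ : ∃ i, i ∈ midColored m c := by
    simpa [midColored, not_or] using hbin
  obtain ⟨c', h₁, hc', hsum, hlt⟩ := exists_mutEquiv_card_midColored_lt hl hm hc hdvd hi
  obtain ⟨c'', h₂, hbin, hsum'⟩ := ih _ (hN ▸ hlt) hc' (hsum ▸ hdvd) rfl
  exact ⟨c'', h₁.trans h₂, hbin, hsum'.trans hsum⟩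

theorem exists_mutEquiv_card_ne_lt {c τ : Fin l → ℕ} (hc : ∀ v, c v = 0 ∨ c v = m)
    (hτ : ∀ v, τ v = 0 ∨ τ v = m) (hsum : ∑ v, c v = ∑ v, τ v) (hcτ : c ≠ τ) :
    ∃ c', MutEquiv m (cycleQuiver m l c) (cycleQuiver m l c') ∧ (∀ v, c' v = 0 ∨ c' v = m) ∧
      ∑ v, c' v = ∑ v, c v ∧
      (univ.filter fun v => c' v ≠ τ v).card < (univ.filter fun v => c v ≠ τ v).card := by
  obtain ⟨i, hi⟩ := exists_lt_of_sum_eq_of_ne hsum hcτ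
  obtain ⟨j, hj⟩ := exists_lt_of_sum_eq_of_ne hsum.symm (Ne.symm hcτ)
  have hci : c i = 0 ∧ τ i = m := by rcases hc i with h | h <;> rcases hτ i with h' | h' <;> omega
  have hcj : c j = m ∧ τ j = 0 := by rcases hc j with h | h <;> rcases hτ j with h' | h' <;> omega
  have hij : i ≠ j := fun h => by subst h; omega
  obtain ⟨n, hn, hnj⟩ := exists_add_natCast_eq hij
  have h₁ := mutEquiv_shiftUnit_of_binary_between hl hm n (c := c) (i := i) hn
    (fun v => by rcases hc v with h | h <;> omega) (by omega) (by rw [hnj]; omega)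
    fun k _ _ => hc _
  rw [hnj] at h₁
  set c' := shiftUnit m c i j with hc'_def
  have hc'v : ∀ v, v ≠ i → v ≠ j → c' v = c v := fun v hvi hvj => shiftUnit_apply_of_ne hvi hvj
  have hc'i : c' i = m := by simp [c', shiftUnit_apply_source hij, hci.1, predColor]
  have hc'j : c' j = 0 := by simp [c', shiftUnit_apply_target, hcj.1, succColor]
  refine ⟨c', h₁, fun v => ?_, ?_,
    card_filter_lt_of_imp (i := i) (fun v hv => ?_) (by omega) (by omega)⟩
  · rcases eq_or_ne v i with rfl | hvi
    · exact .inr hc'i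
    rcases eq_or_ne v j with rfl | hvj
    · exact .inl hc'j
    · rw [hc'v v hvi hvj]; exact hc v
  · have := sum_update_update_add hij c (predColor m (c i)) (succColor m (c j))
    rw [← shiftUnit, ← hc'_def] at this
    simp only [hci.1, hcj.1, predColor, succColor, if_true] at this
    omega
  · rcases eq_or_ne v i with rfl | hvi
    · omega
    rcases eq_or_ne v j with rfl | hvj
    · omega
    · rwa [← hc'v v hvi hvj]

theorem mutEquiv_of_binary {c τ : Fin l → ℕ} (hc : ∀ v, c v = 0 ∨ c v = m)
    (hτ : ∀ v, τ v = 0 ∨ τ v = m) (hsum : ∑ v, c v = ∑ v, τ v) :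
    MutEquiv m (cycleQuiver m l c) (cycleQuiver m l τ) := by
  induction hN : (univ.filter fun v => c v ≠ τ v).card
    using Nat.strong_induction_on generalizing c with
  | _ N ih =>
  by_cases hcτ : c = τ
  · exact hcτ ▸ .refl _
  obtain ⟨c', h₁, hc', hsum', hlt⟩ := exists_mutEquiv_card_ne_lt hl hm hc hτ hsum hcτ
  exact h₁.trans (ih _ (hN ▸ hlt) hc' (hsum'.trans hsum) rfl)

end Sorting

theorem sum_ite_lt_eq_mul (m p q : ℕ) :
    ∑ i : Fin (p + q), (if (i : ℕ) < p then 0 else m) = q * m := by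
  simp [Fin.sum_univ_add]

theorem stmt1_general (m l h : ℕ) (hm : 1 ≤ m) (hl : 3 ≤ l) (hlt : h < l)
    (c : Fin l → ℕ) (hc : ∀ i, c i ≤ m) (hsum : ∑ i, c i = h * m) :
    ∃ Q' : CQ (Fin l), IsTildeA m (l - h) h Q' ∧ MutEquiv m (cycleQuiver m l c) Q' := by
  obtain ⟨p, rfl⟩ : ∃ p, l = p + h := ⟨l - h, by omega⟩
  have : NeZero (p + h) := ⟨by omega⟩
  rw [Nat.add_sub_cancel]
  refine ⟨tildeA m p h, ⟨Equiv.refl _, fun _ _ _ => rfl⟩, ?_⟩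
  obtain ⟨c', hcc', hc', hsum'⟩ := exists_mutEquiv_binary hl hm hc (hsum ▸ dvd_mul_left m h)
  refine hcc'.trans (mutEquiv_of_binary hl hm hc' (fun i => ?_) ?_)
  · split_ifs <;> simp
  · rw [hsum', hsum, sum_ite_lt_eq_mul]

/-- any quiver consisting of a single `(l,h)`-central cycle is
mutation-equivalent to `Ã_{l-h,h}`. -/
theorem stmt1 (m l h : ℕ) (hm : 1 ≤ m) (hl : 3 ≤ l) (hpos : 0 < h) (hlt : h < l)
    (c : Fin l → ℕ) (hc : ∀ i, c i ≤ m) (hsum : ∑ i, c i = h * m) :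
    ∃ Q' : CQ (Fin l), IsTildeA m (l - h) h Q' ∧ MutEquiv m (cycleQuiver m l c) Q' :=
  stmt1_general m l h hm hl hlt c hc hsum

end CM
end

section
/- Let Q ∈ Q^m_{p,q}, let w be a peripheral vertex of Q with associated quiver Q_w ∈ Q^m_{n_w}, and let D be the boundary subquiver of Q containing w. If Q_w is not a quiver of type A_{n_w} (where n_w = |(Q_w)₀|), then there exists a clique C of Q_w that is almost extremal in the subquiver Q_w ∪ D of Q, and therefore almost extremal in Q. -/
open Finset

open scoped Classical

namespace CM

variable {V : Type*}

/-!
The underlying graph of `Q_w` is connected and hole-free, and the neighbourhood of each vertex is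
covered by two cliques with no edges between them; so if it is also triangle-free, every vertex
has at most two neighbours and the graph is a path. In such a graph, deleting the edges of a
maximal clique `K` separates its vertices, since a shortest reconnecting path would close either a
hole or a triangle extending `K`; thus `K` has a separate branch at each of its vertices. As `Q_w`
is not a path, it contains a triangle, hence a maximal clique with at least three vertices, and
one of its branches avoids `w`. A smallest such branch is a path: otherwise it contains a
triangle, whose maximal clique lies in the branch and has a strictly smaller branch avoiding `w`.
The vertices of this branch differ from `w`, the only vertex of `Q_w` in a boundary subquiver, so
they carry the same arrows in `Q_w`, in `Q_w ∪ D` and in `Q`; hence the clique is almost extremal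
in all of them.
-/

lemma fsucc_val {l : ℕ} (i : Fin l) :
    (fsucc i : ℕ) = if (i : ℕ) + 1 = l then 0 else (i : ℕ) + 1 := by
  have := i.isLt
  unfold fsucc
  split_ifs with h
  · simp [h]
  · exact Nat.mod_eq_of_lt (by omega)

section Holes

variable {W : Type*} {G : SimpleGraph W}

lemma HoleFree.induce (hG : HoleFree G) (s : Set W) : HoleFree (G.induce s) :=
  fun n v ⟨h4, hinj, hadj⟩ => hG n (Subtype.val ∘ v) ⟨h4, Subtype.val_injective.comp hinj, hadj⟩

/-- The path together with the edge `xy` is a cycle of length at least four, hence not a hole. -/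
lemma HoleFree.exists_chord (hG : HoleFree G) {x y : W} {p : G.Walk x y} (hp : p.IsPath)
    (hlen : 3 ≤ p.length) (hxy : G.Adj x y) :
    ∃ i j, i + 1 < j ∧ j ≤ p.length ∧ (0 < i ∨ j < p.length) ∧
      G.Adj (p.getVert i) (p.getVert j) := by
  by_contra! hchord
  have hadj : ∀ i j, i < j → j ≤ p.length →
      (G.Adj (p.getVert i) (p.getVert j) ↔ j = i + 1 ∨ (i = 0 ∧ j = p.length)) := by
    intro i j hij hj
    refine ⟨fun h => ?_, ?_⟩
    · by_contra hne
      exact hchord i j (by omega) hj (by omega) h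
    · rintro (rfl | ⟨rfl, rfl⟩)
      · exact p.adj_getVert_succ (by omega)
      · simpa using hxy
  refine hG (p.length + 1) (fun k => p.getVert k) ⟨by omega,
    fun a b hab => Fin.ext (hp.getVert_injOn (by simp; omega) (by simp; omega) hab),
    fun a b => ?_⟩
  have ha := a.isLt
  have hb := b.isLt
  rw [Fin.ext_iff, Fin.ext_iff, fsucc_val, fsucc_val]
  rcases lt_trichotomy (a : ℕ) b with h | h | h
  · rw [hadj a b h (by omega)]
    split_ifs <;> omega
  · rw [Fin.ext h]
    simp only [SimpleGraph.irrefl, false_iff]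
    split_ifs <;> omega
  · rw [G.adj_comm, hadj b a h (by omega)]
    split_ifs <;> omega

end Holes

end CM

namespace SimpleGraph

variable {W : Type*} {G : SimpleGraph W}

lemma Reachable.mem_of_forall_adj {s : Set W} {u v : W} (h : G.Reachable u v) (hu : u ∈ s)
    (hs : ∀ x y, G.Reachable u x → x ∈ s → G.Adj x y → y ∈ s) : v ∈ s := by
  rw [reachable_iff_reflTransGen] at h
  induction h with
  | refl => exact hu
  | tail hux hxy ih => exact hs _ _ ((reachable_iff_reflTransGen _ _).2 hux) ih hxy

lemma connected_induce_reachable (v : W) : (G.induce {u | G.Reachable v u}).Connected := by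
  have hsupp : {u | G.Reachable v u} = (G.connectedComponentMk v).supp := by
    ext u
    simp [ConnectedComponent.mem_supp_iff, ConnectedComponent.eq, reachable_comm]
  rw [hsupp]
  exact (G.connectedComponentMk v).connected_toSimpleGraph

lemma exists_maximal_isClique_of_isNClique [Finite W] {t : Finset W} (ht : G.IsNClique 3 t) :
    ∃ K : Finset W, t ⊆ K ∧ Maximal (fun s : Finset W => G.IsClique ↑s) K ∧ 3 ≤ K.card := by
  obtain ⟨K, htK, hK⟩ := Finite.exists_le_maximal (p := fun s : Finset W => G.IsClique ↑s)
    ht.isClique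
  exact ⟨K, htK, hK, ht.card_eq ▸ Finset.card_le_card htK⟩

theorem nonempty_iso_induce_reachable {W' : Type*} {Γ : SimpleGraph W} {Γ' : SimpleGraph W'}
    {f : W → W'} (hf : Function.Injective f) {v : W}
    (hadj : ∀ x, Γ.Reachable v x → ∀ y, Γ'.Adj (f x) y ↔ ∃ y', f y' = y ∧ Γ.Adj x y') :
    Nonempty (Γ.induce {u | Γ.Reachable v u} ≃g Γ'.induce {u | Γ'.Reachable (f v) u}) := by
  have hmap : ∀ x, Γ.Reachable v x → Γ'.Reachable (f v) (f x) := fun x hx =>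
    hx.mem_of_forall_adj (s := {x | Γ'.Reachable (f v) (f x)}) Reachable.rfl
      fun a b hva hfa hab => hfa.trans ((hadj a hva _).2 ⟨b, rfl, hab⟩).reachable
  have hsurj : ∀ z, Γ'.Reachable (f v) z → ∃ x, Γ.Reachable v x ∧ f x = z := fun z hz =>
    hz.mem_of_forall_adj (s := {z | ∃ x, Γ.Reachable v x ∧ f x = z}) ⟨v, .rfl, rfl⟩
      fun a b _ ⟨x, hx, hxa⟩ hab => by
        subst hxa
        obtain ⟨y, rfl, hxy⟩ := (hadj x hx _).1 hab
        exact ⟨y, hx.trans hxy.reachable, rfl⟩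
  refine ⟨⟨Equiv.ofBijective (fun x => ⟨f x, hmap x x.2⟩) ⟨fun a b h => ?_, fun z => ?_⟩,
    fun {a b} => ?_⟩⟩
  · exact Subtype.ext (hf (congrArg Subtype.val h))
  · obtain ⟨x, hx, hxz⟩ := hsurj z z.2
    exact ⟨⟨x, hx⟩, Subtype.ext hxz⟩
  · change Γ'.Adj (f a) (f b) ↔ Γ.Adj a b
    rw [hadj a a.2]
    exact ⟨fun ⟨y, hy, hay⟩ => hf hy ▸ hay, fun h => ⟨b, rfl, h⟩⟩

variable (G) in
lemma exists_isPath_forall_length_ne [Finite W] [Nonempty W] :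
    ∃ (u v : W) (p : G.Walk u v), p.IsPath ∧
      ∀ (u' v' : W) (q : G.Walk u' v'), q.IsPath → q.length ≠ p.length + 1 := by
  have := Fintype.ofFinite W
  by_contra! h
  have hall : ∀ n, ∃ (u v : W) (p : G.Walk u v), p.IsPath ∧ p.length = n := by
    intro n
    induction n with
    | zero =>
      obtain ⟨u⟩ := ‹Nonempty W›
      exact ⟨u, u, .nil, .nil, rfl⟩
    | succ n ih =>
      obtain ⟨u, v, p, hp, rfl⟩ := ih
      exact h u v p hp
  obtain ⟨u, v, p, hp, hlen⟩ := hall (Fintype.card W)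
  exact absurd hp.length_lt (by omega)

variable (G) in
/-- For the underlying graph of a quiver in `𝒬ᵐₙ`, the cliques `A, B` at `x` are `C_r ∖ {x}` and
`B_k ∖ {x}`. -/
def IsLocallyTwoCliques : Prop :=
  ∀ x, ∃ A B : Set W, G.IsClique A ∧ G.IsClique B ∧ (∀ a ∈ A, ∀ b ∈ B, ¬ G.Adj a b) ∧
    G.neighborSet x ⊆ A ∪ B

variable (G) in
lemma exists_isClique_cover_of_ncard_le_two [Finite W] (x : W)
    (hx : (G.neighborSet x).ncard ≤ 2) :
    ∃ A B : Set W, G.IsClique A ∧ G.IsClique B ∧ (∀ a ∈ A, ∀ b ∈ B, ¬ G.Adj a b) ∧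
      G.neighborSet x ⊆ A ∪ B := by
  by_cases hN : G.IsClique (G.neighborSet x)
  · exact ⟨G.neighborSet x, ∅, hN, isClique_empty, by simp, by simp⟩
  obtain ⟨a, ha, b, hb, hab, hnadj⟩ : ∃ a ∈ G.neighborSet x, ∃ b ∈ G.neighborSet x,
      a ≠ b ∧ ¬ G.Adj a b := by
    simpa [IsClique, Set.Pairwise] using hN
  have hpair : {a, b} = G.neighborSet x :=
    Set.eq_of_subset_of_ncard_le (Set.insert_subset ha (Set.singleton_subset_iff.2 hb))
      (by rw [Set.ncard_pair hab]; omega) (Set.toFinite _)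
  exact ⟨{a}, {b}, isClique_singleton a, isClique_singleton b, by simpa using hnadj,
    hpair ▸ subset_rfl⟩

variable (G) in
def cliqueBranch (K : Finset W) (v : W) : Set W :=
  {u | (G.deleteEdges (K : Set W).sym2).Reachable v u}

lemma mem_cliqueBranch_self (K : Finset W) (v : W) : v ∈ G.cliqueBranch K v :=
  Reachable.refl v

lemma mem_cliqueBranch_of_adj {K : Finset W} {v u y : W} (hu : u ∈ G.cliqueBranch K v)
    (huK : u ∉ K) (huy : G.Adj u y) : y ∈ G.cliqueBranch K v :=
  Reachable.trans hu (deleteEdges_adj.2 ⟨huy, fun h => huK h.1⟩).reachable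

lemma induce_deleteEdges_cliqueBranch {K : Finset W} {v : W}
    (hsep : ∀ u ∈ K, u ∈ G.cliqueBranch K v → u = v) :
    (G.deleteEdges (K : Set W).sym2).induce (G.cliqueBranch K v) =
      G.induce (G.cliqueBranch K v) := by
  ext a b
  simp only [comap_adj, Function.Embedding.subtype_apply, deleteEdges_adj, Set.mk_mem_sym2_iff,
    Finset.mem_coe, and_iff_left_iff_imp]
  rintro hab ⟨ha, hb⟩
  exact hab.ne ((hsep _ ha a.2).trans (hsep _ hb b.2).symm)

lemma coe_subset_cliqueBranch {K K' : Finset W} {v x : W} (hK' : G.IsClique (K' : Set W))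
    (hx : x ∈ K') (hxT : x ∈ G.cliqueBranch K v) (hxK : x ∉ K) :
    (K' : Set W) ⊆ G.cliqueBranch K v := fun u hu => by
  by_cases hux : u = x
  · exact hux ▸ hxT
  · exact mem_cliqueBranch_of_adj hxT hxK (hK' hx hu (Ne.symm hux))

lemma cliqueBranch_subset_sdiff {K K' : Finset W} {v v' : W}
    (hsep : ∀ u ∈ K, u ∈ G.cliqueBranch K v → u = v) (hv' : v' ∈ G.cliqueBranch K v)
    (hvv' : v ∉ G.cliqueBranch K' v') : G.cliqueBranch K' v' ⊆ G.cliqueBranch K v \ {v} :=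
  fun u hu => by
    refine Reachable.mem_of_forall_adj hu ⟨hv', ?_⟩ fun y z hy hyT hyz => ⟨?_, ?_⟩
    · rintro rfl
      exact hvv' (mem_cliqueBranch_self K' _)
    · exact mem_cliqueBranch_of_adj hyT.1 (fun hyK => hyT.2 (hsep y hyK hyT.1))
        (deleteEdges_adj.1 hyz).1
    · rintro rfl
      exact hvv' (hy.trans hyz.reachable)

lemma disjoint_erase_of_forall_not_adj {C B : Finset W} {x : W} (hC : G.IsClique ↑C)
    (hB : G.IsClique ↑B) (hcross : ∀ a ∈ C.erase x, ∀ b ∈ B.erase x, ¬ G.Adj a b)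
    (hcard : 5 ≤ C.card + B.card) : Disjoint (C.erase x) (B.erase x) := by
  refine Finset.disjoint_left.2 fun u huC huB => ?_
  have hC2 : C ⊆ {x, u} := fun c hc => by
    by_contra hne
    simp only [Finset.mem_insert, Finset.mem_singleton, not_or] at hne
    exact hcross c (Finset.mem_erase.2 ⟨hne.1, hc⟩) u huB
      (hC hc (Finset.mem_of_mem_erase huC) hne.2)
  have hB2 : B ⊆ {x, u} := fun b hb => by
    by_contra hne
    simp only [Finset.mem_insert, Finset.mem_singleton, not_or] at hne
    exact hcross u huC b (Finset.mem_erase.2 ⟨hne.1, hb⟩)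
      (hB (Finset.mem_of_mem_erase huB) hb (Ne.symm hne.2))
  have := Finset.card_le_card hC2
  have := Finset.card_le_card hB2
  have := Finset.card_le_two (a := x) (b := u)
  omega

namespace IsLocallyTwoCliques

lemma induce (hG : G.IsLocallyTwoCliques) (s : Set W) : (G.induce s).IsLocallyTwoCliques := by
  intro x
  obtain ⟨A, B, hA, hB, hAB, hN⟩ := hG x
  exact ⟨Subtype.val ⁻¹' A, Subtype.val ⁻¹' B,
    fun a ha b hb hab => hA ha hb (Subtype.val_injective.ne hab),
    fun a ha b hb hab => hB ha hb (Subtype.val_injective.ne hab),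
    fun a ha b hb => hAB a ha b hb, fun y hy => hN hy⟩

lemma adj_of_adj_of_adj (hG : G.IsLocallyTwoCliques) {x a b c : W} (ha : G.Adj x a)
    (hb : G.Adj x b) (hc : G.Adj x c) (hab : G.Adj a b) (hbc : G.Adj b c) (hac : a ≠ c) :
    G.Adj a c := by
  obtain ⟨A, B, hA, hB, hAB, hN⟩ := hG x
  rcases hN ha with haA | haB <;> rcases hN hb with hbA | hbB <;> rcases hN hc with hcA | hcB
  · exact hA haA hcA hac
  · exact absurd hbc (hAB b hbA c hcB)
  · exact absurd hab (hAB a haA b hbB)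
  · exact absurd hab (hAB a haA b hbB)
  · exact absurd hab.symm (hAB b hbA a haB)
  · exact absurd hab.symm (hAB b hbA a haB)
  · exact absurd hbc.symm (hAB c hcA b hbB)
  · exact hB haB hcB hac

lemma eq_or_eq_or_eq_of_adj (hG : G.IsLocallyTwoCliques) (h3 : G.CliqueFree 3) {x a b c : W}
    (ha : G.Adj x a) (hb : G.Adj x b) (hc : G.Adj x c) : a = b ∨ a = c ∨ b = c := by
  obtain ⟨A, B, hA, hB, -, hN⟩ := hG x
  have triangle : ∀ {y z}, G.Adj x y → G.Adj x z → G.Adj y z → False := fun hy hz hyz =>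
    h3 _ (is3Clique_triple_iff.2 ⟨hy, hz, hyz⟩)
  by_contra! hne
  obtain ⟨hab, hac, hbc⟩ := hne
  rcases hN ha with haA | haB <;> rcases hN hb with hbA | hbB <;> rcases hN hc with hcA | hcB
  · exact triangle ha hb (hA haA hbA hab)
  · exact triangle ha hb (hA haA hbA hab)
  · exact triangle ha hc (hA haA hcA hac)
  · exact triangle hb hc (hB hbB hcB hbc)
  · exact triangle hb hc (hA hbA hcA hbc)
  · exact triangle ha hc (hB haB hcB hac)
  · exact triangle ha hb (hB haB hbB hab)
  · exact triangle ha hb (hB haB hbB hab)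

lemma eq_getVert_of_adj_getVert (hG : G.IsLocallyTwoCliques) (h3 : G.CliqueFree 3) {u v : W}
    {p : G.Walk u v} (hp : p.IsPath) {i : ℕ} {z : W} (hi0 : 0 < i) (hin : i < p.length)
    (hz : G.Adj (p.getVert i) z) : z = p.getVert (i - 1) ∨ z = p.getVert (i + 1) := by
  have hprev : G.Adj (p.getVert i) (p.getVert (i - 1)) := by
    have := p.adj_getVert_succ (i := i - 1) (by omega)
    rw [Nat.sub_add_cancel hi0] at this
    exact this.symm
  rcases hG.eq_or_eq_or_eq_of_adj h3 hprev (p.adj_getVert_succ hin) hz with h | h | h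
  · exact absurd (hp.getVert_injOn (by simp; omega) (by simp; omega) h) (by omega)
  · exact Or.inl h.symm
  · exact Or.inr h.symm

/-- Every path is induced: a chord at an interior vertex would give it a third neighbour, and
a chord between the ends closes a triangle or, by `HoleFree.exists_chord`, forces another chord. -/
lemma adj_getVert_iff (hG : G.IsLocallyTwoCliques) (hH : CM.HoleFree G) (h3 : G.CliqueFree 3)
    {u v : W} {p : G.Walk u v} (hp : p.IsPath) {i j : ℕ} (hij : i < j) (hj : j ≤ p.length) :
    G.Adj (p.getVert i) (p.getVert j) ↔ i + 1 = j := by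
  have hinj : ∀ {i j}, i ≤ p.length → j ≤ p.length → p.getVert i = p.getVert j → i = j :=
    fun hi hj h => hp.getVert_injOn hi hj h
  have hchord : ∀ {i j}, i + 1 < j → j ≤ p.length → (0 < i ∨ j < p.length) →
      ¬ G.Adj (p.getVert i) (p.getVert j) := by
    intro i j hij hj hend h
    rcases hend with hi | hj'
    · rcases hG.eq_getVert_of_adj_getVert h3 hp hi (by omega) h with h' | h' <;>
        have := hinj (by omega) (by omega) h' <;> omega
    · rcases hG.eq_getVert_of_adj_getVert h3 hp (by omega) hj' h.symm with h' | h' <;>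
        have := hinj (by omega) (by omega) h' <;> omega
  refine ⟨fun h => ?_, fun h => h ▸ p.adj_getVert_succ (by omega)⟩
  by_contra hne
  by_cases hend : 0 < i ∨ j < p.length
  · exact hchord (by omega) hj hend h
  obtain ⟨rfl, rfl⟩ : i = 0 ∧ j = p.length := by omega
  rw [p.getVert_zero, p.getVert_length] at h
  by_cases hn2 : p.length = 2
  · apply h3 {p.getVert 0, p.getVert 1, p.getVert 2}
    rw [is3Clique_triple_iff]
    refine ⟨p.adj_getVert_succ (by omega), ?_, p.adj_getVert_succ (by omega)⟩
    rwa [p.getVert_zero, ← hn2, p.getVert_length]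
  · obtain ⟨i, j, hij, hj, hend, h⟩ := hH.exists_chord hp (by omega) h
    exact hchord hij hj hend h

/-- A longest path is induced and spans everything: an endpoint with a further neighbour would
extend it, and an interior vertex has no neighbours besides its two path neighbours. -/
theorem exists_iso_pathGraph [Finite W] (hG : G.IsLocallyTwoCliques) (hH : CM.HoleFree G)
    (h3 : G.CliqueFree 3) (hc : G.Connected) : ∃ n, Nonempty (pathGraph n ≃g G) := by
  have := hc.nonempty
  obtain ⟨u, v, p, hp, hmax⟩ := G.exists_isPath_forall_length_ne
  have hsupp : ∀ z, z ∈ p.support := by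
    intro z
    refine (hc.preconnected u z).mem_of_forall_adj (s := {x | x ∈ p.support})
      p.start_mem_support fun x y _ hx hxy => ?_
    obtain ⟨i, rfl, hi⟩ := Walk.mem_support_iff_exists_getVert.1 hx
    by_contra hy
    rcases Nat.eq_zero_or_pos i with rfl | hi0
    · rw [p.getVert_zero] at hxy
      exact hmax _ _ (Walk.cons hxy.symm p) (hp.cons hy) (by simp)
    by_cases hin : i = p.length
    · rw [hin, p.getVert_length] at hxy
      exact hmax _ _ (p.concat hxy) (hp.concat hy hxy) (by simp)
    rcases hG.eq_getVert_of_adj_getVert h3 hp hi0 (by omega) hxy with rfl | rfl <;>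
      exact hy (p.getVert_mem_support _)
  have hbij : Function.Bijective fun k : Fin (p.length + 1) => p.getVert k := by
    refine ⟨fun a b h => Fin.ext (hp.getVert_injOn (by simp; omega) (by simp; omega) h),
      fun z => ?_⟩
    obtain ⟨i, rfl, hi⟩ := Walk.mem_support_iff_exists_getVert.1 (hsupp z)
    exact ⟨⟨i, by omega⟩, rfl⟩
  refine ⟨p.length + 1, ⟨Equiv.ofBijective _ hbij, fun {a b} => ?_⟩⟩
  simp only [Equiv.ofBijective_apply, pathGraph_adj]
  rcases lt_trichotomy (a : ℕ) b with h | h | h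
  · rw [hG.adj_getVert_iff hH h3 hp h (by omega)]
    omega
  · rw [Fin.ext h]
    simp
  · rw [G.adj_comm, hG.adj_getVert_iff hH h3 hp h (by omega)]
    omega

lemma mem_of_adj_of_adj (hG : G.IsLocallyTwoCliques) {K : Finset W}
    (hK : Maximal (fun s : Finset W => G.IsClique ↑s) K) {a b z : W} (ha : a ∈ K) (hb : b ∈ K)
    (hab : a ≠ b) (haz : G.Adj a z) (hzb : G.Adj z b) : z ∈ K := by
  have hclique : G.IsClique ↑(insert z K) := by
    rw [Finset.coe_insert]
    refine hK.1.insert fun u hu hzu => ?_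
    by_cases hua : u = a
    · exact hua ▸ haz.symm
    by_cases hub : u = b
    · exact hub ▸ hzb
    exact hG.adj_of_adj_of_adj haz (hK.1 ha hb hab) (hK.1 ha hu (Ne.symm hua)) hzb
      (hK.1 hb hu (Ne.symm hub)) hzu
  exact hK.2 hclique (Finset.subset_insert z K) (Finset.mem_insert_self z K)

theorem eq_of_mem_cliqueBranch (hG : G.IsLocallyTwoCliques) (hH : CM.HoleFree G)
    {K : Finset W} (hK : Maximal (fun s : Finset W => G.IsClique ↑s) K) {u v : W}
    (hu : u ∈ K) (hv : v ∈ K) (huv : u ∈ G.cliqueBranch K v) : u = v := by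
  set Γ := G.deleteEdges (K : Set W).sym2
  by_contra hne
  obtain ⟨p₀⟩ := huv
  have hex : ∃ n, ∃ (a b : W) (p : Γ.Walk a b), a ∈ K ∧ b ∈ K ∧ a ≠ b ∧ p.IsPath ∧
      p.length = n := ⟨_, v, u, p₀.bypass, hv, hu, Ne.symm hne, p₀.bypass_isPath, rfl⟩
  have hmin : ∀ {a' b'} (q : Γ.Walk a' b'), a' ∈ K → b' ∈ K → a' ≠ b' →
      Nat.find hex ≤ q.length := fun q ha' hb' hab' =>
    (Nat.find_min' hex ⟨_, _, q.bypass, ha', hb', hab', q.bypass_isPath, rfl⟩).trans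
      q.length_bypass_le_length
  obtain ⟨a, b, p, ha, hb, hab, hp, hlen⟩ := Nat.find_spec hex
  have hinterior : ∀ {k}, 0 < k → k < p.length → p.getVert k ∉ K := by
    intro k hk0 hkn hk
    have hne : a ≠ p.getVert k := fun h => by
      have := hp.getVert_injOn (by simp) (by simp; omega) (p.getVert_zero.trans h)
      omega
    have := hmin (p.take k) ha hk hne
    rw [Walk.take_length] at this
    omega
  have hGab : G.Adj a b := hK.1 ha hb hab
  have hlen0 : p.length ≠ 0 := fun h => hab (Walk.eq_of_length_eq_zero h)
  have hlen1 : p.length ≠ 1 := fun h => (deleteEdges_adj.1 (Walk.adj_of_length_eq_one h)).2 ⟨ha, hb⟩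
  by_cases hlen2 : p.length = 2
  · have haz := (deleteEdges_adj.1 (p.adj_getVert_succ (i := 0) (by omega))).1
    have hzb := (deleteEdges_adj.1 (p.adj_getVert_succ (i := 1) (by omega))).1
    rw [p.getVert_zero] at haz
    rw [show 1 + 1 = p.length by omega, p.getVert_length] at hzb
    exact hinterior (k := 1) (by omega) (by omega) (hG.mem_of_adj_of_adj hK ha hb hab haz hzb)
  · obtain ⟨i, j, hij, hj, hend, hchord⟩ :=
      hH.exists_chord ((Walk.isPath_mapLe (deleteEdges_le _)).2 hp)
        (by rw [Walk.length_mapLe]; omega) hGab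
    simp only [Walk.length_mapLe, Walk.getVert_map, Hom.coe_ofLE, id] at hj hend hchord
    have hΓ : Γ.Adj (p.getVert i) (p.getVert j) := by
      refine deleteEdges_adj.2 ⟨hchord, fun hK' => ?_⟩
      rcases hend with hi | hj'
      · exact hinterior hi (by omega) hK'.1
      · exact hinterior (by omega) hj' hK'.2
    have := hmin ((p.take i).append (Walk.cons hΓ (p.drop j))) ha hb hab
    simp only [Walk.length_append, Walk.length_cons, Walk.take_length, Walk.drop_length] at this
    omega

lemma exists_notMem_cliqueBranch (hG : G.IsLocallyTwoCliques) (hH : CM.HoleFree G)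
    {K : Finset W} (hK : Maximal (fun s : Finset W => G.IsClique ↑s) K) (hK2 : 2 ≤ K.card)
    (w₀ : W) : ∃ v ∈ K, w₀ ∉ G.cliqueBranch K v := by
  by_cases h : ∃ k ∈ K, w₀ ∈ G.cliqueBranch K k
  · obtain ⟨k, hk, hw₀k⟩ := h
    obtain ⟨v, hv, hvk⟩ := Finset.exists_mem_ne hK2 k
    refine ⟨v, hv, fun hw₀v => hvk ?_⟩
    exact (hG.eq_of_mem_cliqueBranch hH hK hk hv (Reachable.trans hw₀v hw₀k.symm)).symm
  · obtain ⟨v, hv⟩ := Finset.card_pos.1 (by omega : 0 < K.card)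
    exact ⟨v, hv, fun hw₀ => h ⟨v, hv, hw₀⟩⟩

theorem exists_cliqueBranch_iso_pathGraph_of_notMem [Finite W] (hG : G.IsLocallyTwoCliques)
    (hH : CM.HoleFree G) {w₀ : W} (K : Finset W) (v : W)
    (hK : Maximal (fun s : Finset W => G.IsClique ↑s) K) (hK3 : 3 ≤ K.card) (hv : v ∈ K)
    (hw₀ : w₀ ∉ G.cliqueBranch K v) :
    ∃ (K' : Finset W) (v' : W), Maximal (fun s : Finset W => G.IsClique ↑s) K' ∧
      3 ≤ K'.card ∧ v' ∈ K' ∧ w₀ ∉ G.cliqueBranch K' v' ∧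
      ∃ n, Nonempty (pathGraph n ≃g G.induce (G.cliqueBranch K' v')) := by
  induction hN : (G.cliqueBranch K v).ncard using Nat.strong_induction_on generalizing K v with
  | _ N ih =>
  set T := G.cliqueBranch K v
  by_cases hpath : ∃ n, Nonempty (pathGraph n ≃g G.induce T)
  · exact ⟨K, v, hK, hK3, hv, hw₀, hpath⟩
  have hsep : ∀ u ∈ K, u ∈ T → u = v := fun u hu huT => hG.eq_of_mem_cliqueBranch hH hK hu hv huT
  have hconn : (G.induce T).Connected :=
    induce_deleteEdges_cliqueBranch hsep ▸ connected_induce_reachable v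
  obtain ⟨t, ht⟩ : ∃ t, (G.induce T).IsNClique 3 t := by
    by_contra! h3
    exact hpath ((hG.induce T).exists_iso_pathGraph (hH.induce T) h3 hconn)
  obtain ⟨a, b, c, hab, hac, hbc, rfl⟩ := is3Clique_iff.1 ht
  obtain ⟨K', habc, hK', hK'3⟩ := exists_maximal_isClique_of_isNClique (G := G)
    (t := {a.1, b.1, c.1}) (is3Clique_triple_iff.2 ⟨hab, hac, hbc⟩)
  obtain ⟨x, hxK', hxT, hxv⟩ : ∃ x ∈ K', x ∈ T ∧ x ≠ v := by
    by_cases hav : a.1 = v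
    · exact ⟨b, habc (by simp), b.2, fun hbv => hab.ne (Subtype.ext (hav.trans hbv.symm))⟩
    · exact ⟨a, habc (by simp), a.2, hav⟩
  obtain ⟨v', hv', hvv'⟩ := hG.exists_notMem_cliqueBranch hH hK' (by omega) v
  have hsub := cliqueBranch_subset_sdiff hsep
    (coe_subset_cliqueBranch hK'.1 hxK' hxT (fun hxK => hxv (hsep x hxK hxT)) hv') hvv'
  have hlt : (G.cliqueBranch K' v').ncard < N := hN ▸ Set.ncard_lt_ncard
    (hsub.trans_ssubset (Set.sdiff_singleton_ssubset.2 (mem_cliqueBranch_self K v)))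
    (Set.toFinite _)
  exact ih _ hlt K' v' hK' hK'3 hv' (fun h => hw₀ (hsub h).1) rfl

theorem exists_cliqueBranch_iso_pathGraph [Finite W] (hG : G.IsLocallyTwoCliques)
    (hH : CM.HoleFree G) (hc : G.Connected) (hnp : ¬ ∃ n, Nonempty (pathGraph n ≃g G))
    (w₀ : W) :
    ∃ (K : Finset W) (v : W), G.IsClique ↑K ∧ 3 ≤ K.card ∧ v ∈ K ∧ w₀ ∉ G.cliqueBranch K v ∧
      ∃ n, Nonempty (pathGraph n ≃g
        (G.deleteEdges (K : Set W).sym2).induce (G.cliqueBranch K v)) := by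
  obtain ⟨t, ht⟩ : ∃ t, G.IsNClique 3 t := by
    by_contra! h3
    exact hnp (hG.exists_iso_pathGraph hH h3 hc)
  obtain ⟨K, -, hK, hK3⟩ := exists_maximal_isClique_of_isNClique ht
  obtain ⟨v, hv, hw₀⟩ := hG.exists_notMem_cliqueBranch hH hK (by omega) w₀
  obtain ⟨K', v', hK', hK'3, hv', hw₀', hpath⟩ :=
    hG.exists_cliqueBranch_iso_pathGraph_of_notMem hH K v hK hK3 hv hw₀
  refine ⟨K', v', hK'.1, hK'3, hv', hw₀', ?_⟩
  rwa [induce_deleteEdges_cliqueBranch fun u hu huT => hG.eq_of_mem_cliqueBranch hH hK' hu hv' huT]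

end IsLocallyTwoCliques

end SimpleGraph

namespace CM

variable {V : Type*} {m : ℕ}

lemma IsColoredQuiver.hasArrow_symm {Q : CQ V} (hQ : IsColoredQuiver m Q) {a b : V}
    (h : HasArrow m Q a b) : HasArrow m Q b a := by
  obtain ⟨c, hc, hne⟩ := h
  exact ⟨m - c, Nat.sub_le m c, hQ.skew a b c hc ▸ hne⟩

lemma IsColoredQuiver.underlying_adj_iff {Q : CQ V} (hQ : IsColoredQuiver m Q) {a b : V} :
    (underlying m Q).Adj a b ↔ a ≠ b ∧ HasArrow m Q a b :=
  ⟨fun ⟨hne, h⟩ => ⟨hne, h.elim id hQ.hasArrow_symm⟩, fun ⟨hne, h⟩ => ⟨hne, Or.inl h⟩⟩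

lemma IsColoredQuiver.isClique_iff {Q : CQ V} (hQ : IsColoredQuiver m Q) {C : Finset V} :
    IsClique m Q C ↔ (underlying m Q).IsClique (C : Set V) :=
  ⟨fun h _ ha _ hb hab => hQ.underlying_adj_iff.2 ⟨hab, h _ ha _ hb hab⟩,
    fun h _ ha _ hb hab => (hQ.underlying_adj_iff.1 (h ha hb hab)).2⟩

lemma underlying_restrict (Q : CQ V) (S : Set V) :
    underlying m (Q.restrict S) = (underlying m Q).induce S := by
  ext a b
  simp [underlying, HasArrow, CQ.restrict, Subtype.ext_iff]

lemma underlying_delCliqueArrows (Q : CQ V) (C : Finset V) :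
    underlying m (delCliqueArrows Q C) = (underlying m Q).deleteEdges (C : Set V).sym2 := by
  ext a b
  simp only [underlying, HasArrow, delCliqueArrows, SimpleGraph.deleteEdges_adj,
    Set.mk_mem_sym2_iff, Finset.mem_coe]
  by_cases ha : a ∈ C <;> by_cases hb : b ∈ C <;> simp [ha, hb]

lemma isTypeA_iff {n : ℕ} {Q : CQ V} :
    IsTypeA m n Q ↔ Nonempty (SimpleGraph.pathGraph n ≃g underlying m Q) := by
  refine ⟨fun ⟨e, he⟩ => ⟨⟨e, fun {a b} => ?_⟩⟩, fun ⟨e⟩ => ⟨e.toEquiv, fun a b => ?_⟩⟩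
  · rw [he, SimpleGraph.pathGraph_adj]
    omega
  · change (underlying m Q).Adj (e a) (e b) ↔ _
    rw [e.map_adj_iff, SimpleGraph.pathGraph_adj]
    omega

lemma isTypeA_card_of_iso [Finite V] {Q : CQ V} {k : ℕ}
    (e : SimpleGraph.pathGraph k ≃g underlying m Q) : IsTypeA m (Nat.card V) Q := by
  have hk := Nat.card_congr e.toEquiv
  rw [Nat.card_eq_fintype_card, Fintype.card_fin] at hk
  exact isTypeA_iff.2 ⟨hk ▸ e⟩

lemma hasArrow_keepArrows_iff {Q : CQ V} {U : Set V} {a b : V} :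
    HasArrow m (keepArrows Q U) a b ↔ a ∈ U ∧ b ∈ U ∧ HasArrow m Q a b := by
  by_cases h : a ∈ U ∧ b ∈ U <;> simp [HasArrow, keepArrows, h]
  tauto

/-- At a vertex of degree at least three the two cliques `C_r, B_k` cover the neighbourhood,
since they meet only in `x` (else both would lie in a single edge) and their sizes add up to
the degree plus two. -/
theorem ClassQA.isLocallyTwoCliques [Finite V] {n : ℕ} {Q : CQ V} (hQ : ClassQA m n Q) :
    (underlying m Q).IsLocallyTwoCliques := by
  obtain ⟨hcol, -, -, -, -, hcliques, -⟩ := hQ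
  set G := underlying m Q
  intro x
  by_cases hdeg : 3 ≤ deg m Q x
  · obtain ⟨C, B, hC, hB, hxC, hxB, hcard, -, -, hCB⟩ := hcliques x (by omega)
    rw [hcol.isClique_iff] at hC hB
    have hcross : ∀ a ∈ C.erase x, ∀ b ∈ B.erase x, ¬ G.Adj a b := fun a ha b hb hab => by
      rw [Finset.mem_erase] at ha hb
      exact hCB a ha.2 b hb.2 ha.1 hb.1 (hcol.underlying_adj_iff.1 hab).2
    have hdisj := SimpleGraph.disjoint_erase_of_forall_not_adj hC hB hcross (by omega)
    have hsub : ((C.erase x ∪ B.erase x : Finset V) : Set V) ⊆ G.neighborSet x := by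
      intro u hu
      simp only [Finset.coe_union, Finset.coe_erase, Set.mem_union, Set.mem_sdiff,
        Finset.mem_coe, Set.mem_singleton_iff] at hu
      rcases hu with ⟨huC, hux⟩ | ⟨huB, hux⟩
      · exact hC hxC huC (Ne.symm hux)
      · exact hB hxB huB (Ne.symm hux)
    have heq : ((C.erase x ∪ B.erase x : Finset V) : Set V) = G.neighborSet x := by
      refine Set.eq_of_subset_of_ncard_le hsub ?_ (Set.toFinite _)
      rw [Set.ncard_coe_finset, Finset.card_union_of_disjoint hdisj,
        Finset.card_erase_of_mem hxC, Finset.card_erase_of_mem hxB]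
      change deg m Q x ≤ _
      omega
    refine ⟨C.erase x, B.erase x, hC.subset (Finset.erase_subset x C),
      hB.subset (Finset.erase_subset x B), hcross, ?_⟩
    rw [← heq, Finset.coe_union]
  · exact G.exists_isClique_cover_of_ncard_le_two x (by change deg m Q x ≤ 2; omega)

open SimpleGraph in
theorem almostExtremal_of_cliqueBranch {X Y : CQ V} {S : Set V}
    (hS : ∀ x ∈ S, ∀ y, (underlying m X).Adj x y → y ∈ S) {K : Finset S} {v : S}
    (hK3 : 3 ≤ K.card)
    (hpath : ∃ n, Nonempty (pathGraph n ≃g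
      ((underlying m (X.restrict S)).deleteEdges (K : Set S).sym2).induce
        ((underlying m (X.restrict S)).cliqueBranch K v)))
    (hC : IsClique m Y (K.map (Function.Embedding.subtype _)))
    (hYX : ∀ x ∈ (underlying m (X.restrict S)).cliqueBranch K v, ∀ y : V,
      (HasArrow m Y x y ↔ HasArrow m X x y) ∧ (HasArrow m Y y x ↔ HasArrow m X y x)) :
    AlmostExtremal m Y (K.map (Function.Embedding.subtype _)) := by
  obtain ⟨n, ⟨e⟩⟩ := hpath
  have hadj : ∀ x, ((underlying m (X.restrict S)).deleteEdges (K : Set S).sym2).Reachable v x →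
      ∀ y, (underlying m (delCliqueArrows Y (K.map (Function.Embedding.subtype _)))).Adj x y ↔
        ∃ y' : S, (y' : V) = y ∧
          ((underlying m (X.restrict S)).deleteEdges (K : Set S).sym2).Adj x y' := by
    intro x hx y
    have hXY : (underlying m Y).Adj x y ↔ (underlying m X).Adj x y := by
      obtain ⟨h1, h2⟩ := hYX x hx y
      exact and_congr_right fun _ => or_congr h1 h2
    simp only [underlying_delCliqueArrows, underlying_restrict, deleteEdges_adj, hXY,
      Set.mk_mem_sym2_iff, Finset.coe_map, Function.Embedding.coe_subtype, Set.mem_image,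
      Finset.mem_coe, comap_adj, Function.Embedding.subtype_apply]
    constructor
    · rintro ⟨hxy, hK⟩
      refine ⟨⟨y, hS x x.2 y hxy⟩, rfl, hxy, fun h => hK ⟨⟨x, h.1, rfl⟩, ⟨_, h.2, rfl⟩⟩⟩
    · rintro ⟨y, rfl, hxy, hK⟩
      refine ⟨hxy, fun ⟨⟨x', hx', hxx'⟩, ⟨y', hy', hyy'⟩⟩ => hK ⟨?_, ?_⟩⟩
      · rwa [← Subtype.ext hxx']
      · rwa [← Subtype.ext hyy']
  obtain ⟨e'⟩ := nonempty_iso_induce_reachable Subtype.val_injective hadj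
  refine ⟨hC, by simpa using hK3, v, n, Nat.pos_of_ne_zero ?_, isTypeA_iff.2 ?_⟩
  · rintro rfl
    exact (e.symm ⟨v, mem_cliqueBranch_self K v⟩).elim0
  · rw [underlying_restrict]
    exact ⟨e.trans e'⟩

namespace QpqData

variable {p q : ℕ} [Fintype V] {Q : CQ V} (d : QpqData m p q Q)

lemma del_apply (u v : V) (c : ℕ) :
    d.Del u v c = if ∃ i, u ∈ d.D i ∧ v ∈ d.D i then 0 else Q u v c := by
  rw [d.hDel]

lemma hasArrow_of_hasArrow_del {a b : V} (h : HasArrow m d.Del a b) : HasArrow m Q a b := by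
  obtain ⟨c, hc, hne⟩ := h
  refine ⟨c, hc, fun h0 => hne ?_⟩
  rw [del_apply]
  split_ifs <;> [rfl; exact h0]

lemma hasArrow_del_iff {x : V} (hx : ∀ j, x ∉ d.D j) (y : V) :
    (HasArrow m d.Del x y ↔ HasArrow m Q x y) ∧ (HasArrow m d.Del y x ↔ HasArrow m Q y x) := by
  have h1 : ¬ ∃ j, x ∈ d.D j ∧ y ∈ d.D j := fun ⟨j, hj, _⟩ => hx j hj
  have h2 : ¬ ∃ j, y ∈ d.D j ∧ x ∈ d.D j := fun ⟨j, _, hj⟩ => hx j hj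
  simp only [HasArrow, del_apply, h1, h2, if_false, and_self]

lemma notMem_D_of_mem_comp {w x : V} (hw : d.Peripheral w) (hx : x ∈ d.comp w) (hxw : x ≠ w)
    (j : Fin d.l) : x ∉ d.D j := by
  intro hxD
  by_cases hxa : x ∈ Set.range d.a
  · obtain ⟨t, rfl⟩ := hxa
    obtain ⟨p⟩ := hx
    exact d.central_isolated t _ (p.reverse.adj_snd (SimpleGraph.Walk.not_nil_of_ne hxw))
  · exact d.periph_disj w x hw.1 hxa hw.2 ⟨j, hxD⟩ (Ne.symm hxw) hx

lemma mem_comp_of_hasArrow {w x y : V} (hx : x ∈ d.comp w) (hxD : ∀ j, x ∉ d.D j)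
    (h : HasArrow m Q x y ∨ HasArrow m Q y x) : y ∈ d.comp w := by
  by_cases hxy : x = y
  · exact hxy ▸ hx
  obtain ⟨h1, h2⟩ := d.hasArrow_del_iff hxD y
  exact SimpleGraph.Reachable.trans hx (SimpleGraph.Adj.reachable ⟨hxy, by rwa [h1, h2]⟩)

lemma hasArrow_keepArrows_iff {w x : V} {U : Set V} (hU : d.comp w ⊆ U) (hx : x ∈ d.comp w)
    (hxD : ∀ j, x ∉ d.D j) (y : V) :
    (HasArrow m (keepArrows Q U) x y ↔ HasArrow m Q x y) ∧
      (HasArrow m (keepArrows Q U) y x ↔ HasArrow m Q y x) := by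
  simp only [CM.hasArrow_keepArrows_iff]
  exact ⟨⟨fun h => h.2.2, fun h => ⟨hU hx, hU (d.mem_comp_of_hasArrow hx hxD (.inl h)), h⟩⟩,
    ⟨fun h => h.2.2, fun h => ⟨hU (d.mem_comp_of_hasArrow hx hxD (.inr h)), hU hx, h⟩⟩⟩

end QpqData

theorem stmt3_general {V : Type*} [Fintype V] (m p q : ℕ) (Q : CQ V) (d : QpqData m p q Q) (w : V)
    (hw : w ∉ Set.range d.a) (i : Fin d.l) (hwD : w ∈ d.D i)
    (hnotA : ¬ IsTypeA m (d.nw w) (CQ.restrict d.Del (d.comp w))) :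
    ∃ C : Finset V, ↑C ⊆ d.comp w ∧ IsClique m d.Del C ∧
      AlmostExtremal m (keepArrows Q (d.comp w ∪ ↑(d.D i))) C ∧
      AlmostExtremal m Q C := by
  have hQw : ClassQA m (d.nw w) (d.Del.restrict (d.comp w)) := d.QwClass w hw ⟨i, hwD⟩
  have hL := hQw.isLocallyTwoCliques
  obtain ⟨hcol, -, hcard, hconn, hholes, -, -⟩ := hQw
  obtain ⟨K, v, hK, hK3, -, hwK, hpath⟩ := hL.exists_cliqueBranch_iso_pathGraph hholes hconn
    (fun ⟨_, ⟨e⟩⟩ => hnotA (hcard ▸ isTypeA_card_of_iso e)) ⟨w, .refl w⟩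
  have hCS : ↑(K.map (Function.Embedding.subtype _)) ⊆ d.comp w := by simp
  have hCdel : IsClique m d.Del (K.map (Function.Embedding.subtype _)) := by
    rw [← hcol.isClique_iff] at hK
    simpa [IsClique, HasArrow, CQ.restrict] using hK
  have hbranch : ∀ x ∈ (underlying m (d.Del.restrict (d.comp w))).cliqueBranch K v,
      ∀ j, (x : V) ∉ d.D j := fun x hx => d.notMem_D_of_mem_comp ⟨hw, i, hwD⟩ x.2
    fun hxw => hwK ((Subtype.ext hxw : x = ⟨w, _⟩) ▸ hx)
  have hQ := fun x hx y => (d.hasArrow_del_iff (hbranch x hx) y).imp Iff.symm Iff.symm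
  have hS : ∀ x ∈ d.comp w, ∀ y, (underlying m d.Del).Adj x y → y ∈ d.comp w :=
    fun x hx y hxy => SimpleGraph.Reachable.trans hx hxy.reachable
  refine ⟨_, hCS, hCdel, almostExtremal_of_cliqueBranch hS hK3 hpath ?_ fun x hx y => ?_,
    almostExtremal_of_cliqueBranch hS hK3 hpath
      (fun a ha b hb hab => d.hasArrow_of_hasArrow_del (hCdel a ha b hb hab)) hQ⟩
  · exact fun a ha b hb hab => hasArrow_keepArrows_iff.2
      ⟨.inl (hCS ha), .inl (hCS hb), d.hasArrow_of_hasArrow_del (hCdel a ha b hb hab)⟩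
  · obtain ⟨h1, h2⟩ := hQ x hx y
    obtain ⟨k1, k2⟩ := d.hasArrow_keepArrows_iff Set.subset_union_left x.2 (hbranch x hx) y
    exact ⟨k1.trans h1, k2.trans h2⟩

/-- if the quiver `Q_w` attached to a peripheral vertex `w` of a
quiver in `𝒬ᵐ_{p,q}` is not of type `A_{n_w}`, then it contains a clique that
is almost extremal in `Q_w ∪ D` and in `Q`. -/
theorem stmt3 {V : Type*} [Fintype V] (m p q : ℕ) (hm : 1 ≤ m) (hp : 1 ≤ p)
    (hq : 1 ≤ q) (Q : CQ V) (d : QpqData m p q Q) (w : V)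
    (hw : w ∉ Set.range d.a) (i : Fin d.l) (hwD : w ∈ d.D i)
    (hnotA : ¬ IsTypeA m (d.nw w) (CQ.restrict d.Del (d.comp w))) :
    ∃ C : Finset V, ↑C ⊆ d.comp w ∧ IsClique m d.Del C ∧
      AlmostExtremal m (keepArrows Q (d.comp w ∪ ↑(d.D i))) C ∧
      AlmostExtremal m Q C :=
  stmt3_general m p q Q d w hw i hwD hnotA

end CM
end

section
/- Let m, p, q ≥ 1 and let Q ∈ Q^m_{p,q}. Then every vertex v of Q has at most two outgoing arrows of color 0, counted with multiplicity: Σ_{j ∈ Q₀} q_{vj}^{(0)} ≤ 2. -/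
open Finset

open scoped Classical

namespace CM

variable {V : Type*}

/-! Two color-`0` arrows `v → x`, `v → y` never lie on an `m`-admissible triangle, so two
adjacent color-`0` out-neighbours of `v` span the central triangle together with `v`. Away from
the central triangle the color-`0` out-neighbours of `v` are therefore pairwise non-adjacent,
and the two cliques `C_r`, `B_k` through `v` leave room for at most two of them. At a vertex of a
central triangle a color-`0` arrow to a peripheral vertex is ruled out by a color count, so the
out-neighbours are among the two other central vertices. Multiplicities are at most one, except
for the double arrow of `Δ^m_2`, which then carries all color-`0` arrows leaving `v`. -/

theorem fsucc_fsucc_fsucc {l : ℕ} (hl : l = 3) (i : Fin l) : fsucc (fsucc (fsucc i)) = i := by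
  subst hl; fin_cases i <;> rfl

theorem sum_fin_three_fsucc {l : ℕ} (hl : l = 3) (f : Fin l → ℕ) (i : Fin l) :
    ∑ t, f t = f i + f (fsucc i) + f (fsucc (fsucc i)) := by
  subst hl; fin_cases i <;> simp [Fin.sum_univ_three, fsucc] <;> omega

theorem eq_fsucc_or_eq_fsucc {l : ℕ} (hl : l ≤ 3) {s t : Fin l} (hst : s ≠ t) :
    t = fsucc s ∨ s = fsucc t := by
  have := s.isLt
  have := t.isLt
  have := Fin.val_ne_of_ne hst
  simp only [Fin.ext_iff, fsucc]
  interval_cases l <;> omega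

theorem sum_le_two_of_le_one [Fintype V] {f : V → ℕ} (h1 : ∀ j, f j ≤ 1)
    (h3 : ∀ x y z, x ≠ y → x ≠ z → y ≠ z → f x ≠ 0 → f y ≠ 0 → f z ≠ 0 → False) :
    ∑ j, f j ≤ 2 := by
  have hsupp : #{j | f j ≠ 0} ≤ 2 := by
    by_contra! hgt
    obtain ⟨x, hx, y, hy, z, hz, hxy, hxz, hyz⟩ := Finset.two_lt_card.mp hgt
    simp only [Finset.mem_filter, Finset.mem_univ, true_and] at hx hy hz
    exact h3 x y z hxy hxz hyz hx hy hz
  calc ∑ j, f j = ∑ j with f j ≠ 0, f j := (Finset.sum_filter_ne_zero _).symm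
    _ ≤ #{j | f j ≠ 0} • 1 := Finset.sum_le_card_nsmul _ _ _ fun j _ => h1 j
    _ ≤ 2 := by simpa using hsupp

section

variable {m : ℕ} {Q : CQ V}

theorem IsClique.subset {C D : Finset V} (hD : IsClique m Q D) (h : C ⊆ D) :
    IsClique m Q C :=
  fun i hi j hj hij => hD i (h hi) j (h hj) hij

def IsIndepSet (m : ℕ) (Q : CQ V) (s : Finset V) : Prop :=
  ∀ i ∈ s, ∀ j ∈ s, i ≠ j → ¬ HasArrow m Q i j

theorem IsIndepSet.card_inter_le_one {S C : Finset V} (hS : IsIndepSet m Q S)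
    (hC : IsClique m Q C) : #(S ∩ C) ≤ 1 := by
  refine Finset.card_le_one.mpr fun i hi j hj => ?_
  rw [Finset.mem_inter] at hi hj
  by_contra hij
  exact hS i hi.1 j hj.1 hij (hC i hi.2 j hj.2 hij)

theorem IsIndepSet.exists_notMem_union {S C B : Finset V} (hS : IsIndepSet m Q S)
    (hcard : 2 < #S) (hC : IsClique m Q C) (hB : IsClique m Q B) : ∃ s ∈ S, s ∉ C ∪ B := by
  by_contra! hsub
  have : S ⊆ S ∩ C ∪ S ∩ B := fun s hs => by
    rcases Finset.mem_union.mp (hsub s hs) with h | h <;> simp [hs, h]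
  have := (Finset.card_le_card this).trans (Finset.card_union_le _ _)
  have := hS.card_inter_le_one hC
  have := hS.card_inter_le_one hB
  omega

theorem card_le_deg [Finite V] {v : V} {T : Finset V}
    (hT : ∀ u ∈ T, (underlying m Q).Adj v u) : #T ≤ deg m Q v := by
  rw [← Set.ncard_coe_finset]
  exact Set.ncard_le_ncard (fun u hu => hT u hu) (Set.toFinite _)

theorem card_union_le_deg [Finite V] {v s : V} {C B : Finset V} (hC : IsClique m Q C)
    (hB : IsClique m Q B) (hvC : v ∈ C) (hvB : v ∈ B) (hs : (underlying m Q).Adj v s)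
    (hsCB : s ∉ C ∪ B) : #(C ∪ B) ≤ deg m Q v := by
  have hv : v ∈ insert s (C ∪ B) := Finset.mem_insert_of_mem (Finset.mem_union_left _ hvC)
  have := card_le_deg (m := m) (Q := Q) (v := v) (T := (insert s (C ∪ B)).erase v) <| by
    intro u hu
    obtain ⟨huv, hu⟩ := Finset.mem_erase.mp hu
    rcases Finset.mem_insert.mp hu with rfl | hu
    · exact hs
    rcases Finset.mem_union.mp hu with hu | hu
    · exact ⟨huv.symm, Or.inl (hC v hvC u hu huv.symm)⟩
    · exact ⟨huv.symm, Or.inl (hB v hvB u hu huv.symm)⟩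
  rwa [Finset.card_erase_of_mem hv, Finset.card_insert_of_notMem hsCB,
    Nat.add_sub_cancel] at this

theorem subset_pair_of_mem_inter {v u : V} {C B : Finset V} (hC : IsClique m Q C)
    (hsep : ∀ x ∈ C, ∀ y ∈ B, x ≠ v → y ≠ v → x ≠ y → ¬ HasArrow m Q x y)
    (huC : u ∈ C) (huB : u ∈ B) (huv : u ≠ v) : C ⊆ {v, u} := fun w hw => by
  by_contra hw'
  simp only [Finset.mem_insert, Finset.mem_singleton, not_or] at hw'
  exact hsep w hw u huB hw'.1 huv hw'.2 (hC w hw u huC hw'.2)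

namespace IsColoredQuiver

theorem ne_of_ne_zero (hc : IsColoredQuiver m Q) {i j : V} {c : ℕ} (h : Q i j c ≠ 0) :
    i ≠ j := by
  rintro rfl
  exact h (hc.noLoops i c)

theorem reverse_ne_zero (hc : IsColoredQuiver m Q) {i j : V} {c : ℕ} (hcm : c ≤ m)
    (h : Q i j c ≠ 0) : Q j i (m - c) ≠ 0 := by
  rwa [← hc.skew i j c hcm]

theorem hasArrow_symm_s16 (hc : IsColoredQuiver m Q) {i j : V} (h : HasArrow m Q i j) :
    HasArrow m Q j i :=
  let ⟨c, hcm, h⟩ := h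
  ⟨m - c, Nat.sub_le _ _, hc.reverse_ne_zero hcm h⟩

theorem color_eq (hc : IsColoredQuiver m Q) {i j : V} {c c' : ℕ} (h : Q i j c ≠ 0)
    (h' : Q i j c' ≠ 0) : c = c' := by
  by_contra hne
  exact h' (hc.mono i j c c' h hne)

theorem adj_of_ne_zero (hc : IsColoredQuiver m Q) {i j : V} {c : ℕ} (hcm : c ≤ m)
    (h : Q i j c ≠ 0) : (underlying m Q).Adj i j :=
  ⟨hc.ne_of_ne_zero h, Or.inl ⟨c, hcm, h⟩⟩

theorem isClique_triple (hc : IsColoredQuiver m Q) {x y z : V} (hxy : HasArrow m Q x y)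
    (hxz : HasArrow m Q x z) (hyz : HasArrow m Q y z) : IsClique m Q {x, y, z} := by
  have := hc.hasArrow_symm_s16 hxy
  have := hc.hasArrow_symm_s16 hxz
  have := hc.hasArrow_symm_s16 hyz
  intro i hi j hj hij
  simp only [Finset.mem_insert, Finset.mem_singleton] at hi hj
  rcases hi with rfl | rfl | rfl <;> rcases hj with rfl | rfl | rfl <;>
    first | exact absurd rfl hij | assumption

theorem color_sum_of_mAdmissible (hc : IsColoredQuiver m Q) {x y z : V} {a b c : ℕ}
    (hadm : MAdmissible m Q x y z) (hxy : Q x y a ≠ 0) (hyz : Q y z b ≠ 0)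
    (hzx : Q z x c ≠ 0) : a + b + c = m - 1 ∨ a + b + c = 2 * m + 1 := by
  obtain ⟨a', b', c', -, -, -, hxy', hyz', hzx', hsum⟩ := hadm
  rwa [hc.color_eq hxy hxy', hc.color_eq hyz hyz', hc.color_eq hzx hzx']

/-- The side `y → v` has color `m`, so the side `x → y` would need color `m + 1`. -/
theorem not_mAdmissible_of_zero_zero (hc : IsColoredQuiver m Q) (hm : 1 ≤ m) {v x y : V}
    (hx : Q v x 0 ≠ 0) (hy : Q v y 0 ≠ 0) : ¬ MAdmissible m Q v x y := by
  rintro ⟨a, b, c, -, hbm, hcm, hxy, -, hzx, hsum⟩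
  have := hc.color_eq hx hxy
  have := hc.color_eq hy (hc.reverse_ne_zero hcm hzx)
  omega

end IsColoredQuiver

namespace QpqData

variable {p q : ℕ} [Fintype V] (d : QpqData m p q Q)

theorem exists_D_of_hasArrow {i : Fin d.l} {w : V} (hw : HasArrow m Q (d.a i) w) :
    ∃ k, d.a i ∈ d.D k ∧ w ∈ d.D k := by
  obtain ⟨c, hcm, hQ⟩ := hw
  by_contra hno
  refine d.central_isolated i w ⟨d.colored.ne_of_ne_zero hQ, Or.inl ⟨c, hcm, ?_⟩⟩
  simpa only [d.hDel, if_neg hno] using hQ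

theorem hasArrow_central (hl : d.l ≤ 3) {s t : Fin d.l} (hst : s ≠ t) :
    HasArrow m Q (d.a s) (d.a t) := by
  rcases eq_fsucc_or_eq_fsucc hl hst with rfl | rfl
  · exact ⟨d.col s, d.colLe s, d.arrows s⟩
  · exact d.colored.hasArrow_symm_s16 ⟨d.col t, d.colLe t, d.arrows t⟩

/-- With at most three central vertices the central vertices form a clique, so by maximality
every boundary subquiver contains all of them. -/
theorem central_mem_D (hl : d.l ≤ 3) (t k : Fin d.l) : d.a t ∈ d.D k := by
  have hclique : IsClique m Q (Finset.univ.image d.a) := by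
    simp only [IsClique, Finset.mem_image, Finset.mem_univ, true_and]
    rintro _ ⟨s, rfl⟩ _ ⟨t, rfl⟩ hst
    exact d.hasArrow_central hl fun h => hst (h ▸ rfl)
  exact d.Dmax k _ hclique (by simp) (by simp) (by simp)

theorem mAdmissible_of_mem_D {k : Fin d.l} {x y z : V} (hx : x ∈ d.D k) (hy : y ∈ d.D k)
    (hz : z ∈ d.D k) (hxy : x ≠ y) (hyz : y ≠ z) (hxz : x ≠ z) (hy' : y ∉ Set.range d.a) :
    MAdmissible m Q x y z := by
  refine d.admissible x y z hxy hyz hxz ((d.Dclique k).subset ?_) ?_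
  · simp [Finset.insert_subset_iff, hx, hy, hz]
  · rintro ⟨-, hset⟩
    exact hy' (hset ▸ by simp)

theorem zero_out_le_one {v j : V} (h : ¬ (d.l = 2 ∧ v ∈ Set.range d.a ∧ j ∈ Set.range d.a)) :
    Q v j 0 ≤ 1 := by
  rcases eq_or_ne j v with rfl | hjv
  · simp [d.colored.noLoops]
  have hsum : ∑ c ∈ Finset.range (m + 1), Q v j c ≤ 1 := by
    by_cases hl : d.l = 2
    · exact (d.double2 hl).2 v j hjv.symm (by tauto)
    · exact d.simple3 (by have := d.hl; omega) v j hjv.symm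
  exact (Finset.single_le_sum (fun _ _ => Nat.zero_le _) (by simp)).trans hsum

theorem central_arrow_eq_two (hl : d.l = 2) {s t : Fin d.l} {c : ℕ} (hcm : c ≤ m)
    (h : Q (d.a s) (d.a t) c ≠ 0) : Q (d.a s) (d.a t) c = 2 := by
  obtain ⟨s, hs⟩ := s
  obtain ⟨t, ht⟩ := t
  have hst : s ≠ t := fun hst => d.colored.ne_of_ne_zero h (by subst hst; rfl)
  obtain ⟨rfl, rfl⟩ | ⟨rfl, rfl⟩ : s = 0 ∧ t = 1 ∨ s = 1 ∧ t = 0 := by omega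
  · exact (d.double2 hl).1 c hcm h
  · rw [d.colored.skew _ _ c hcm] at h ⊢
    exact (d.double2 hl).1 (m - c) (Nat.sub_le _ _) h

theorem central_of_zero_out_hasArrow (hm : 1 ≤ m) {v x y : V} (hx : Q v x 0 ≠ 0)
    (hy : Q v y 0 ≠ 0) (hxy : x ≠ y) (harr : HasArrow m Q x y) :
    d.l = 3 ∧ ({v, x, y} : Set V) = Set.range d.a := by
  have hc := d.colored
  by_contra hne
  refine hc.not_mAdmissible_of_zero_zero hm hx hy (d.admissible v x y
    (hc.ne_of_ne_zero hx) hxy (hc.ne_of_ne_zero hy) (hc.isClique_triple ?_ ?_ harr) hne)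
  exacts [⟨0, Nat.zero_le m, hx⟩, ⟨0, Nat.zero_le m, hy⟩]

theorem sum_zero_out_eq_two (hm : 1 ≤ m) (hl : d.l = 2) {s t : Fin d.l}
    (h : Q (d.a s) (d.a t) 0 ≠ 0) : ∑ j, Q (d.a s) j 0 = 2 := by
  have hother : ∀ j, j ≠ d.a t → Q (d.a s) j 0 = 0 := by
    intro j hjt
    by_contra hj
    obtain ⟨k, -, hjk⟩ := d.exists_D_of_hasArrow ⟨0, Nat.zero_le m, hj⟩
    have harr := d.Dclique k _ (d.central_mem_D (by omega) t k) j hjk hjt.symm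
    have := (d.central_of_zero_out_hasArrow hm h hj hjt.symm harr).1
    omega
  rw [Finset.sum_eq_single (d.a t) (fun j _ => hother j) (by simp)]
  exact d.central_arrow_eq_two hl (Nat.zero_le m) h

/-- In a central triangle `(v b c)` a color-`0` arrow `v → w` to a peripheral vertex `w` would
make `(v w b)`, `(v w c)` and `(b w c)` admissible triangles; their color sums force the
central colors to add up to neither `m` nor `2 m`. -/
theorem zero_out_mem_range_of_central (hm : 1 ≤ m) (hl : d.l = 3) (i : Fin d.l) {w : V}
    (hw : Q (d.a i) w 0 ≠ 0) : w ∈ Set.range d.a := by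
  have hc := d.colored
  by_contra hwc
  obtain ⟨k, -, hwk⟩ := d.exists_D_of_hasArrow ⟨0, Nat.zero_le m, hw⟩
  have hne : ∀ {s t : Fin d.l} {c : ℕ}, Q (d.a s) (d.a t) c ≠ 0 → s ≠ t :=
    fun h hst => hc.ne_of_ne_zero h (hst ▸ rfl)
  have adm : ∀ {s t : Fin d.l}, s ≠ t → MAdmissible m Q (d.a s) w (d.a t) := fun hst =>
    d.mAdmissible_of_mem_D (d.central_mem_D hl.le _ k) hwk (d.central_mem_D hl.le _ k)
      (fun h => hwc ⟨_, h⟩) (fun h => hwc ⟨_, h.symm⟩) (fun h => hst (d.inja h)) hwc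
  have hsum := d.csum
  rw [sum_fin_three_fsucc hl d.col i] at hsum
  set i₁ := fsucc i
  set i₂ := fsucc i₁
  have h₀ := d.arrows i
  have h₁ := d.arrows i₁
  have h₂ := d.arrows i₂
  rw [show fsucc i₂ = i from fsucc_fsucc_fsucc hl i] at h₂
  obtain ⟨β, hβ, hwb⟩ := d.Dclique k w hwk _ (d.central_mem_D hl.le i₁ k)
    (fun h => hwc ⟨i₁, h.symm⟩)
  obtain ⟨γ, -, hwc'⟩ := d.Dclique k w hwk _ (d.central_mem_D hl.le i₂ k)
    (fun h => hwc ⟨i₂, h.symm⟩)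
  have e₁ := hc.color_sum_of_mAdmissible (adm (hne h₀)) hw hwb
    (hc.reverse_ne_zero (d.colLe i) h₀)
  have e₂ := hc.color_sum_of_mAdmissible (adm (hne h₂).symm) hw hwc' h₂
  have e₃ := hc.color_sum_of_mAdmissible (adm (hne h₁)) (hc.reverse_ne_zero hβ hwb) hwc'
    (hc.reverse_ne_zero (d.colLe i₁) h₁)
  have := d.colLe i
  have := d.colLe i₁
  have := d.colLe i₂
  obtain hh | hh : d.h = 1 ∨ d.h = 2 := by have := d.hpos; have := d.hlt; omega
  all_goals
    rw [hh] at hsum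
    omega

theorem card_le_two_of_isIndepSet {v : V} (hv : ¬ (d.l = 3 ∧ v ∈ Set.range d.a)) {S : Finset V}
    (hS : IsIndepSet m Q S) (hSv : ∀ s ∈ S, (underlying m Q).Adj v s) : #S ≤ 2 := by
  by_contra! hcard
  have hdeg : #S ≤ deg m Q v := card_le_deg hSv
  obtain ⟨C, B, hC, hB, hvC, hvB, hC1, -, hB1, -, hdegCB, hCB⟩ := d.vertexCliques v (by omega)
  have hsep : ∀ x ∈ C, ∀ y ∈ B, x ≠ v → y ≠ v → x ≠ y → ¬ HasArrow m Q x y :=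
    fun x hx y hy hxv hyv hxy harr => by
      obtain ⟨hl, hset⟩ := hCB x hx y hy hxv hyv hxy harr
      exact hv ⟨hl, hset ▸ by simp⟩
  obtain ⟨s, hsS, hsCB⟩ := hS.exists_notMem_union hcard hC hB
  have hunion := card_union_le_deg hC hB hvC hvB (hSv s hsS) hsCB
  obtain ⟨u, huCB, huv⟩ : ∃ u ∈ C ∩ B, u ≠ v := by
    refine Finset.exists_mem_ne ?_ v
    have := Finset.card_union_add_card_inter C B
    split_ifs at hdegCB <;> omega
  obtain ⟨huC, huB⟩ := Finset.mem_inter.mp huCB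
  have hCsub := subset_pair_of_mem_inter hC hsep huC huB huv
  have hBsub := subset_pair_of_mem_inter hB (fun x hx y hy hxv hyv hxy harr =>
    hsep y hy x hx hyv hxv hxy.symm (d.colored.hasArrow_symm_s16 harr)) huB huC huv
  have := Finset.card_le_card hCsub
  have := Finset.card_le_card hBsub
  have : #({v, u} : Finset V) ≤ 2 := Finset.card_le_two
  split_ifs at hdegCB <;> omega

theorem no_three_zero_out (d : QpqData m p q Q) (hm : 1 ≤ m) {v x y z : V} (hxy : x ≠ y)
    (hxz : x ≠ z) (hyz : y ≠ z) (hx : Q v x 0 ≠ 0) (hy : Q v y 0 ≠ 0) (hz : Q v z 0 ≠ 0) :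
    False := by
  have hc := d.colored
  have hcard : #({x, y, z} : Finset V) = 3 :=
    Finset.card_eq_three.mpr ⟨x, y, z, hxy, hxz, hyz, rfl⟩
  have hS : ∀ s ∈ ({x, y, z} : Finset V), Q v s 0 ≠ 0 := by simp [hx, hy, hz]
  by_cases hv : d.l = 3 ∧ v ∈ Set.range d.a
  · obtain ⟨hl, i, rfl⟩ := hv
    have hsub : insert (d.a i) ({x, y, z} : Finset V) ⊆ Finset.univ.image d.a := by
      refine Finset.insert_subset (by simp) fun s hs => ?_
      obtain ⟨t, ht⟩ := d.zero_out_mem_range_of_central hm hl i (hS s hs)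
      simp [← ht]
    have := (Finset.card_le_card hsub).trans Finset.card_image_le
    rw [Finset.card_insert_of_notMem fun h => hc.ne_of_ne_zero (hS _ h) rfl, hcard] at this
    simp [hl] at this
  · have hindep : IsIndepSet m Q {x, y, z} := fun s hs t ht hst harr => by
      obtain ⟨hl, hset⟩ := d.central_of_zero_out_hasArrow hm (hS s hs) (hS t ht) hst harr
      exact hv ⟨hl, hset ▸ by simp⟩
    have := d.card_le_two_of_isIndepSet hv hindep fun s hs =>
      hc.adj_of_ne_zero (Nat.zero_le m) (hS s hs)
    omega

end QpqData

end

theorem stmt16_general {V : Type*} [Fintype V] (m p q : ℕ) (hm : 1 ≤ m)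
    (Q : CQ V) (hQ : ClassQpq m p q Q) (v : V) :
    (∑ j : V, Q v j 0) ≤ 2 := by
  obtain ⟨d⟩ := hQ
  by_cases hdouble : ∃ s t, d.l = 2 ∧ v = d.a s ∧ Q v (d.a t) 0 ≠ 0
  · obtain ⟨s, t, hl, rfl, h⟩ := hdouble
    exact (d.sum_zero_out_eq_two hm hl h).le
  push Not at hdouble
  refine sum_le_two_of_le_one (fun j => ?_) fun x y z => d.no_three_zero_out hm
  by_cases hj : d.l = 2 ∧ v ∈ Set.range d.a ∧ j ∈ Set.range d.a
  · obtain ⟨hl, ⟨s, rfl⟩, ⟨t, rfl⟩⟩ := hj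
    simp [hdouble s t hl rfl]
  · exact d.zero_out_le_one hj

/-- in `𝒬ᵐ_{p,q}`, every vertex has at most two outgoing
arrows of color `0`, counted with multiplicity. -/
theorem stmt16 {V : Type*} [Fintype V] (m p q : ℕ) (hm : 1 ≤ m) (hp : 1 ≤ p)
    (hq : 1 ≤ q) (Q : CQ V) (hQ : ClassQpq m p q Q) (v : V) :
    (∑ j : V, Q v j 0) ≤ 2 :=
  stmt16_general m p q hm Q hQ v

end CM
end
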